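/- arXiv:1310.1769 — 6 statements merged into one kernel-verified Lean document; each statement's English description precedes it below -/
import Mathlib

section
/- Given a SALM trajectory and a KKT point (X*, Y_1*, …, Y_N*, Λ_1*, …, Λ_N*), for every k ≥ 0 the following identity holds: ∑_{i=1}^N [ ⟨Y_i^{k+1} − Y_i^k, Y_i^{k+1} − Y_i*⟩ + (β^k)^{−2} ⟨Λ_i^{k+1} − Λ_i^k, Λ_i^{k+1} − Λ_i*⟩ ] = (1/β^k) ∑_{i=1}^N [ ⟨Y_i^{k+1} − Y_i^k, Λ_i^{k+1} − Λ_i^k⟩ − ⟨X^{k+1} − X*, Λ̃_i^{k+1} − Λ_i*⟩ + ⟨Y_i^{k+1} − Y_i*, Λ_i^{k+1} − Λ_i*⟩ ]. -/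
open RealInnerProductSpace

/-- The subdifferential of a convex function `h : T → ℝ` at `Y`. -/
def subdiff {T : Type*} [NormedAddCommGroup T] [InnerProductSpace ℝ T]
    (h : T → ℝ) (Y : T) : Set T :=
  {Q | ∀ Y' : T, h Y' ≥ h Y + ⟪Y' - Y, Q⟫}

/-- The normal cone of a set `B ⊆ T` at `X`. -/
def normalCone {T : Type*} [NormedAddCommGroup T] [InnerProductSpace ℝ T]
    (B : Set T) (X : T) : Set T :=
  {Z | ∀ X' ∈ B, ⟪Z, X' - X⟫ ≤ 0}

lemma salm_term {T : Type*} [NormedAddCommGroup T] [InnerProductSpace ℝ T]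
    (c : ℝ) (hc : c ≠ 0) (a b x xs l ls : T) :
    ⟪a - b, a - xs⟫ + (c ^ 2)⁻¹ * ⟪(l - c•(x-a)) - l, (l - c•(x-a)) - ls⟫
    = c⁻¹ * (⟪a - b, (l - c•(x-a)) - l⟫ - ⟪x - xs, (l - c•(x-b)) - ls⟫
        + ⟪a - xs, (l - c•(x-a)) - ls⟫) := by
  simp only [inner_sub_left, inner_sub_right, real_inner_smul_left, real_inner_smul_right]
  field_simp
  rw [real_inner_comm xs b, real_inner_comm x b, real_inner_comm xs a, real_inner_comm x a]
  ring

/-- The identity (5.4) along a SALM trajectory relative to a KKT point, where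
Λ̃_i^{k+1} = Λ_i^k − β^k (X^{k+1} − Y_i^k). -/
theorem salm_identity
    {T : Type*} [NormedAddCommGroup T] [InnerProductSpace ℝ T] [FiniteDimensional ℝ T]
    {N : ℕ} (hN : 0 < N)
    (B : Set T) (hBne : B.Nonempty) (hBclosed : IsClosed B) (hBconv : Convex ℝ B)
    (h : Fin N → T → ℝ) (hconv : ∀ i, ConvexOn ℝ Set.univ (h i))
    (X : ℕ → T) (Y Λ : Fin N → ℕ → T) (β : ℕ → ℝ)
    (hXB : ∀ k : ℕ, X (k + 1) ∈ B) (hβ : ∀ k : ℕ, 0 < β k)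
    (ha : ∀ k : ℕ, (∑ i, (Λ i k - β k • (X (k + 1) - Y i k))) ∈ normalCone B (X (k + 1)))
    (hb : ∀ (k : ℕ) (i : Fin N), -(Λ i (k + 1)) ∈ subdiff (h i) (Y i (k + 1)))
    (hc : ∀ (k : ℕ) (i : Fin N), Λ i (k + 1) = Λ i k - β k • (X (k + 1) - Y i (k + 1)))
    (Xs : T) (Ys Λs : Fin N → T)
    (hXsB : Xs ∈ B) (hΛs : (∑ i, Λs i) ∈ normalCone B Xs)
    (hbs : ∀ i, -(Λs i) ∈ subdiff (h i) (Ys i))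
    (hYs : ∀ i, Ys i = Xs)
    : ∀ k : ℕ,
      ∑ i, (⟪Y i (k + 1) - Y i k, Y i (k + 1) - Ys i⟫
            + ((β k) ^ 2)⁻¹ * ⟪Λ i (k + 1) - Λ i k, Λ i (k + 1) - Λs i⟫)
      = (β k)⁻¹ *
          ∑ i, (⟪Y i (k + 1) - Y i k, Λ i (k + 1) - Λ i k⟫
                - ⟪X (k + 1) - Xs, (Λ i k - β k • (X (k + 1) - Y i k)) - Λs i⟫
                + ⟪Y i (k + 1) - Ys i, Λ i (k + 1) - Λs i⟫) := by
  intro k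
  rw [Finset.mul_sum]
  refine Finset.sum_congr rfl fun i _ => ?_
  rw [hYs i, hc k i]
  exact salm_term (β k) (hβ k).ne' (Y i (k+1)) (Y i k) (X (k+1)) Xs (Λ i k) (Λs i)
end

section
/- Given a SALM trajectory with β^{k+1} ≥ β^k for all k ≥ 0 and a KKT point (X*, Y_1*, …, Y_N*, Λ_1*, …, Λ_N*), for every K ≥ 0 the partial sums satisfy ∑_{k=0}^{K} ( − ∑_{i=1}^N [ ⟨Y_i^{k+1} − Y_i^k, Y_i^{k+1} − Y_i*⟩ + (β^k)^{−2} ⟨Λ_i^{k+1} − Λ_i^k, Λ_i^{k+1} − Λ_i*⟩ ] ) ≤ (1/2) ∑_{i=1}^N ( ‖Y_i^0 − Y_i*‖² + (β^0)^{−2} ‖Λ_i^0 − Λ_i*‖² ); in particular, since each summand is nonnegative, the infinite series converges. -/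
open RealInnerProductSpace

lemma inner_half {T : Type*} [NormedAddCommGroup T] [InnerProductSpace ℝ T] (u v w : T) :
    ⟪u - v, u - w⟫ = (‖u - w‖^2 + ‖u - v‖^2 - ‖v - w‖^2)/2 := by
  simp only [@norm_sub_sq_real T, inner_sub_left, inner_sub_right,
    real_inner_self_eq_norm_sq, real_inner_comm v u, real_inner_comm w u, real_inner_comm w v]
  ring

lemma subdiff_mono {T : Type*} [NormedAddCommGroup T] [InnerProductSpace ℝ T]
    (h : T → ℝ) {p q y z : T} (hp : -p ∈ subdiff h y) (hq : -q ∈ subdiff h z)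
    : ⟪y - z, p - q⟫ ≤ 0 := by
  have h1 := hp z
  have h2 := hq y
  simp only [inner_sub_left, inner_sub_right, inner_neg_right] at h1 h2 ⊢
  have c1 : ⟪z, p⟫ = ⟪p, z⟫ := real_inner_comm _ _
  have c2 : ⟪y, p⟫ = ⟪p, y⟫ := real_inner_comm _ _
  have c3 : ⟪z, q⟫ = ⟪q, z⟫ := real_inner_comm _ _
  have c4 : ⟪y, q⟫ = ⟪q, y⟫ := real_inner_comm _ _
  linarith

set_option maxHeartbeats 1000000 in
lemma per_i_identity {T : Type*} [NormedAddCommGroup T] [InnerProductSpace ℝ T]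
    (u v w s L P : T) (b : ℝ) (hb : 0 < b) :
    ⟪u - v, u - s⟫ + (b^2)⁻¹ * ⟪(L - b • (w - u)) - L, (L - b • (w - u)) - P⟫
      = b⁻¹ * (⟪u - s, (L - b • (w - u)) - P⟫ + ⟪u - v, (L - b • (w - u)) - L⟫
          - ⟪w - s, (L - b • (w - v)) - P⟫) := by
  have hb' : b ≠ 0 := ne_of_gt hb
  simp only [inner_sub_left, inner_sub_right, inner_smul_left, inner_smul_right,
    RCLike.ofReal_real_eq_id, id_eq, conj_trivial]
  field_simp
  linear_combination b^2 * (real_inner_comm w u) - b^2 * (real_inner_comm w v)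
    - b^2 * (real_inner_comm s u) + b^2 * (real_inner_comm s v)

lemma step_nonneg {T : Type*} [NormedAddCommGroup T] [InnerProductSpace ℝ T] {N : ℕ}
    (u v L M P : Fin N → T) (w s : T) (b : ℝ) (hb : 0 < b)
    (hM : ∀ i, M i = L i - b • (w - u i))
    (hA : ∀ i, ⟪u i - s, M i - P i⟫ ≤ 0)
    (hC : ∀ i, ⟪u i - v i, M i - L i⟫ ≤ 0)
    (hD : 0 ≤ ⟪w - s, ∑ i, ((L i - b • (w - v i)) - P i)⟫) :
    ∑ i, (⟪u i - v i, u i - s⟫ + (b^2)⁻¹ * ⟪M i - L i, M i - P i⟫) ≤ 0 := by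
  have key : ∑ i, (⟪u i - v i, u i - s⟫ + (b^2)⁻¹ * ⟪M i - L i, M i - P i⟫)
      = b⁻¹ * (∑ i, ⟪u i - s, M i - P i⟫ + ∑ i, ⟪u i - v i, M i - L i⟫
          - ⟪w - s, ∑ i, ((L i - b • (w - v i)) - P i)⟫) := by
    rw [inner_sum, ← Finset.sum_add_distrib, ← Finset.sum_sub_distrib, Finset.mul_sum]
    refine Finset.sum_congr rfl (fun i _ => ?_)
    rw [hM i]
    exact per_i_identity (u i) (v i) w s (L i) (P i) b hb
  rw [key]
  have h1 : ∑ i, ⟪u i - s, M i - P i⟫ ≤ 0 :=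
    Finset.sum_nonpos (fun i _ => hA i)
  have h2 : ∑ i, ⟪u i - v i, M i - L i⟫ ≤ 0 :=
    Finset.sum_nonpos (fun i _ => hC i)
  have hbinv : (0:ℝ) ≤ b⁻¹ := by positivity
  nlinarith

/-- Lemma 5.2 (iii): the partial sums of the nonnegative quantities
−∑_i [⟪Y_i^{k+1} − Y_i^k, Y_i^{k+1} − Y_i*⟫ + (β^k)⁻² ⟪Λ_i^{k+1} − Λ_i^k, Λ_i^{k+1} − Λ_i*⟫]
are bounded, hence the series converges. -/
theorem salm_series_bound
    {T : Type*} [NormedAddCommGroup T] [InnerProductSpace ℝ T] [FiniteDimensional ℝ T]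
    {N : ℕ} (hN : 0 < N)
    (B : Set T) (hBne : B.Nonempty) (hBclosed : IsClosed B) (hBconv : Convex ℝ B)
    (h : Fin N → T → ℝ) (hconv : ∀ i, ConvexOn ℝ Set.univ (h i))
    (X : ℕ → T) (Y Λ : Fin N → ℕ → T) (β : ℕ → ℝ)
    (hXB : ∀ k : ℕ, X (k + 1) ∈ B) (hβ : ∀ k : ℕ, 0 < β k)
    (ha : ∀ k : ℕ, (∑ i, (Λ i k - β k • (X (k + 1) - Y i k))) ∈ normalCone B (X (k + 1)))
    (hb : ∀ (k : ℕ) (i : Fin N), -(Λ i (k + 1)) ∈ subdiff (h i) (Y i (k + 1)))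
    (hc : ∀ (k : ℕ) (i : Fin N), Λ i (k + 1) = Λ i k - β k • (X (k + 1) - Y i (k + 1)))
    (Xs : T) (Ys Λs : Fin N → T)
    (hXsB : Xs ∈ B) (hΛs : (∑ i, Λs i) ∈ normalCone B Xs)
    (hbs : ∀ i, -(Λs i) ∈ subdiff (h i) (Ys i))
    (hYs : ∀ i, Ys i = Xs)
    (hmono : ∀ k : ℕ, β k ≤ β (k + 1))
    : (∀ K : ℕ,
        ∑ k ∈ Finset.range (K + 1),
          (- ∑ i, (⟪Y i (k + 1) - Y i k, Y i (k + 1) - Ys i⟫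
                   + ((β k) ^ 2)⁻¹ * ⟪Λ i (k + 1) - Λ i k, Λ i (k + 1) - Λs i⟫))
        ≤ (1 / 2) * ∑ i, (‖Y i 0 - Ys i‖ ^ 2 + ((β 0) ^ 2)⁻¹ * ‖Λ i 0 - Λs i‖ ^ 2)) ∧
      Summable (fun k : ℕ =>
        - ∑ i, (⟪Y i (k + 1) - Y i k, Y i (k + 1) - Ys i⟫
                + ((β k) ^ 2)⁻¹ * ⟪Λ i (k + 1) - Λ i k, Λ i (k + 1) - Λs i⟫)) := by
  set a : ℕ → ℝ := fun k =>
    - ∑ i, (⟪Y i (k + 1) - Y i k, Y i (k + 1) - Ys i⟫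
            + ((β k) ^ 2)⁻¹ * ⟪Λ i (k + 1) - Λ i k, Λ i (k + 1) - Λs i⟫) with haa
  set Φ : ℕ → ℝ := fun k =>
    (1 / 2) * ∑ i, (‖Y i k - Ys i‖ ^ 2 + ((β k) ^ 2)⁻¹ * ‖Λ i k - Λs i‖ ^ 2) with hΦ
  -- step inequality
  have hstep : ∀ k : ℕ, a k ≤ Φ k - Φ (k + 1) := by
    intro k
    have hck0 : (0:ℝ) ≤ ((β k)^2)⁻¹ := by
      have := hβ k; positivity
    have hck : ((β (k+1))^2)⁻¹ ≤ ((β k)^2)⁻¹ := by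
      have h1 : (0:ℝ) < (β k)^2 := by have := hβ k; positivity
      have h2 : (β k)^2 ≤ (β (k+1))^2 := by nlinarith [hβ k, hmono k]
      exact inv_anti₀ h1 h2
    have hper : ∀ i : Fin N,
        -(⟪Y i (k + 1) - Y i k, Y i (k + 1) - Ys i⟫
            + ((β k) ^ 2)⁻¹ * ⟪Λ i (k + 1) - Λ i k, Λ i (k + 1) - Λs i⟫)
        ≤ (1/2) * ((‖Y i k - Ys i‖ ^ 2 + ((β k) ^ 2)⁻¹ * ‖Λ i k - Λs i‖ ^ 2)
            - (‖Y i (k+1) - Ys i‖ ^ 2 + ((β (k+1)) ^ 2)⁻¹ * ‖Λ i (k+1) - Λs i‖ ^ 2)) := by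
      intro i
      rw [inner_half (Y i (k+1)) (Y i k) (Ys i), inner_half (Λ i (k+1)) (Λ i k) (Λs i)]
      have n1 : (0:ℝ) ≤ ‖Y i (k+1) - Y i k‖^2 := by positivity
      have n2 : (0:ℝ) ≤ ‖Λ i (k+1) - Λ i k‖^2 := by positivity
      have n3 : (0:ℝ) ≤ ‖Λ i (k+1) - Λs i‖^2 := by positivity
      nlinarith [mul_nonneg hck0 n2, mul_nonneg (sub_nonneg.mpr hck) n3]
    calc a k = ∑ i, -(⟪Y i (k + 1) - Y i k, Y i (k + 1) - Ys i⟫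
            + ((β k) ^ 2)⁻¹ * ⟪Λ i (k + 1) - Λ i k, Λ i (k + 1) - Λs i⟫) := by
          exact (Finset.sum_neg_distrib _).symm
      _ ≤ ∑ i, (1/2) * ((‖Y i k - Ys i‖ ^ 2 + ((β k) ^ 2)⁻¹ * ‖Λ i k - Λs i‖ ^ 2)
            - (‖Y i (k+1) - Ys i‖ ^ 2 + ((β (k+1)) ^ 2)⁻¹ * ‖Λ i (k+1) - Λs i‖ ^ 2)) :=
          Finset.sum_le_sum (fun i _ => hper i)
      _ = Φ k - Φ (k + 1) := by
          rw [hΦ]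
          rw [← Finset.mul_sum, Finset.sum_sub_distrib]
          ring
  have hΦnonneg : ∀ k : ℕ, 0 ≤ Φ k := by
    intro k
    rw [hΦ]
    have := hβ k
    positivity
  have hbound : ∀ K : ℕ, ∑ k ∈ Finset.range (K + 1), a k ≤ Φ 0 := by
    intro K
    calc ∑ k ∈ Finset.range (K + 1), a k
        ≤ ∑ k ∈ Finset.range (K + 1), (Φ k - Φ (k + 1)) :=
          Finset.sum_le_sum (fun k _ => hstep k)
      _ = Φ 0 - Φ (K + 1) := Finset.sum_range_sub' Φ (K + 1)
      _ ≤ Φ 0 := by linarith [hΦnonneg (K + 1)]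
  have hnonneg : ∀ k : ℕ, 0 ≤ a (k + 1) := by
    intro k
    rw [haa]
    rw [neg_nonneg]
    have key : ∑ i, (⟪Y i (k + 2) - Y i (k + 1), Y i (k + 2) - Xs⟫
        + ((β (k+1)) ^ 2)⁻¹ * ⟪Λ i (k + 2) - Λ i (k + 1), Λ i (k + 2) - Λs i⟫) ≤ 0 := by
      apply step_nonneg (fun i => Y i (k+2)) (fun i => Y i (k+1)) (fun i => Λ i (k+1))
        (fun i => Λ i (k+2)) Λs (X (k+2)) Xs (β (k+1)) (hβ (k+1))
      · intro i
        exact hc (k+1) i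
      · intro i
        have := subdiff_mono (h i) (hb (k+1) i) (hbs i)
        rwa [hYs i] at this
      · intro i
        exact subdiff_mono (h i) (hb (k+1) i) (hb k i)
      · -- normal cone part
        have hZ : ⟪∑ i, (Λ i (k+1) - β (k+1) • (X (k+2) - Y i (k+1))), Xs - X (k+2)⟫ ≤ 0 :=
          ha (k+1) Xs hXsB
        have hS := hΛs (X (k+2)) (hXB (k+1))
        rw [Finset.sum_sub_distrib, inner_sub_right]
        have e1 : ⟪X (k+2) - Xs, ∑ i, (Λ i (k+1) - β (k+1) • (X (k+2) - Y i (k+1)))⟫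
            = -⟪∑ i, (Λ i (k+1) - β (k+1) • (X (k+2) - Y i (k+1))), Xs - X (k+2)⟫ := by
          rw [real_inner_comm, ← inner_neg_right, neg_sub]
        have e2 : ⟪X (k+2) - Xs, ∑ i, Λs i⟫ = ⟪∑ i, Λs i, X (k+2) - Xs⟫ :=
          real_inner_comm _ _
        rw [e1, e2]
        linarith
    calc ∑ i, (⟪Y i (k + 1 + 1) - Y i (k + 1), Y i (k + 1 + 1) - Ys i⟫
          + ((β (k+1)) ^ 2)⁻¹ * ⟪Λ i (k + 1 + 1) - Λ i (k + 1), Λ i (k + 1 + 1) - Λs i⟫)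
        = ∑ i, (⟪Y i (k + 2) - Y i (k + 1), Y i (k + 2) - Xs⟫
          + ((β (k+1)) ^ 2)⁻¹ * ⟪Λ i (k + 2) - Λ i (k + 1), Λ i (k + 2) - Λs i⟫) := by
          refine Finset.sum_congr rfl (fun i _ => ?_)
          rw [hYs i]
      _ ≤ 0 := key
  refine ⟨hbound, ?_⟩
  have hsum1 : Summable (fun k => a (k + 1)) := by
    apply summable_of_sum_range_le (c := Φ 0 - a 0) hnonneg
    intro n
    have e : ∑ i ∈ Finset.range (n + 1), a i
        = (∑ i ∈ Finset.range n, a (i + 1)) + a 0 := Finset.sum_range_succ' a n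
    have := hbound n
    linarith
  exact (summable_nat_add_iff 1).mp hsum1
end

section
/- Given a SALM trajectory with β^{k+1} ≥ β^k for all k ≥ 0 and a KKT point (X*, Y_1*, …, Y_N*, Λ_1*, …, Λ_N*), for each i ∈ {1, …, N} the following limits hold as k → ∞: ‖X^{k+1} − Y_i^{k+1}‖ → 0, ‖Y_i^{k+1} − Y_i^k‖ → 0, and (1/β^k) ‖Λ_i^{k+1} − Λ_i^k‖ → 0. -/
open RealInnerProductSpace

open Filter Topology

/-- Algebraic identity used in the decrease estimate. -/
lemma aux_ident{T : Type*} [NormedAddCommGroup T] [InnerProductSpace ℝ T]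
    (c : ℝ) (a r d q : T) :
    ‖a + c • r‖^2 - ‖a‖^2 - c^2*((‖r‖^2 + ‖d‖^2) + ‖q‖^2 - ‖q - d‖^2)
      = 2*c*(⟪a, r + q⟫ - ⟪a, q⟫ - c * ⟪d, q⟫) := by
  have h1 : ‖a + c • r‖^2 = ‖a‖^2 + 2*(c*⟪a,r⟫) + c^2*‖r‖^2 := by
    rw [@norm_add_sq_real, real_inner_smul_right, norm_smul]
    simp [mul_pow, sq_abs]
  have h2 : ‖q - d‖^2 = ‖q‖^2 - 2*⟪d,q⟫ + ‖q - d‖^2 - ‖q - d‖^2 + ‖d‖^2 := by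
    rw [@norm_sub_sq_real, real_inner_comm]; ring
  have h2' : ‖q - d‖^2 = ‖q‖^2 - 2*⟪d,q⟫ + ‖d‖^2 := by linarith
  rw [h1, h2', inner_add_right]
  ring

lemma key_step {T : Type*} [NormedAddCommGroup T] [InnerProductSpace ℝ T]
    {N : ℕ} (c c' : ℝ) (hc0 : 0 < c) (hcc' : c ≤ c')
    (Xk1 Xs : T) (Yk Yk1 Λk Λk1 Λs : Fin N → T)
    (hrec : ∀ i, Λk1 i = Λk i - c • (Xk1 - Yk1 i))
    (hF1 : ∀ i, ⟪Λk1 i - Λs i, Yk1 i - Xs⟫ ≤ 0)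
    (hF3 : ∀ i, 0 ≤ ⟪Yk1 i - Yk i, Xk1 - Yk1 i⟫)
    (hZ : ⟪∑ i, (Λk i - c • (Xk1 - Yk i)), Xs - Xk1⟫ ≤ 0)
    (hS : ⟪∑ i, Λs i, Xk1 - Xs⟫ ≤ 0) :
    ∑ i, (‖Xk1 - Yk1 i‖^2 + ‖Yk1 i - Yk i‖^2)
      ≤ ((c⁻¹)^2 * ∑ i, ‖Λk i - Λs i‖^2 + ∑ i, ‖Yk i - Xs‖^2)
        - ((c'⁻¹)^2 * ∑ i, ‖Λk1 i - Λs i‖^2 + ∑ i, ‖Yk1 i - Xs‖^2) := by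
  -- E2 : aggregated inequality from the normal cone conditions
  have hZ' : ∑ i, ⟪Λk i - c • (Xk1 - Yk i), Xs - Xk1⟫ ≤ 0 := by
    rw [← sum_inner]; exact hZ
  have hS' : ∑ i, ⟪Λs i, Xk1 - Xs⟫ ≤ 0 := by
    rw [← sum_inner]; exact hS
  have h1 : ∀ i : Fin N, ⟪Λk1 i - Λs i, Xk1 - Xs⟫ - c * ⟪Yk1 i - Yk i, Xk1 - Xs⟫
      = -⟪Λk i - c • (Xk1 - Yk i), Xs - Xk1⟫ - ⟪Λs i, Xk1 - Xs⟫ := by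
    intro i
    rw [hrec i]
    simp only [inner_sub_left, inner_sub_right, real_inner_smul_left, smul_sub,
      inner_neg_left, inner_neg_right]
    ring
  have hsplit := Finset.sum_congr rfl (fun i (_ : i ∈ Finset.univ) => h1 i)
  simp only [Finset.sum_sub_distrib, Finset.sum_neg_distrib, ← Finset.mul_sum] at hsplit
  have hE2 : 0 ≤ (∑ i, ⟪Λk1 i - Λs i, Xk1 - Xs⟫) - c * ∑ i, ⟪Yk1 i - Yk i, Xk1 - Xs⟫ := by
    linarith [hsplit, hZ', hS']
  -- decompose ⟪d i, p⟫ = ⟪d i, r i⟫ + ⟪d i, q i⟫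
  have h2 : ∀ i : Fin N, ⟪Yk1 i - Yk i, Xk1 - Xs⟫
      = ⟪Yk1 i - Yk i, Xk1 - Yk1 i⟫ + ⟪Yk1 i - Yk i, Yk1 i - Xs⟫ := by
    intro i
    have e : Xk1 - Xs = (Xk1 - Yk1 i) + (Yk1 i - Xs) := by abel
    rw [e, inner_add_right]
  have hME : (∑ i, ⟪Yk1 i - Yk i, Xk1 - Xs⟫)
      = (∑ i, ⟪Yk1 i - Yk i, Xk1 - Yk1 i⟫) + ∑ i, ⟪Yk1 i - Yk i, Yk1 i - Xs⟫ := by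
    rw [← Finset.sum_add_distrib]
    exact Finset.sum_congr rfl (fun i _ => h2 i)
  have hMF : 0 ≤ ∑ i, ⟪Yk1 i - Yk i, Xk1 - Yk1 i⟫ :=
    Finset.sum_nonneg fun i _ => hF3 i
  have hMB : (∑ i, ⟪Λk1 i - Λs i, Yk1 i - Xs⟫) ≤ 0 :=
    Finset.sum_nonpos fun i _ => hF1 i
  have hdistr : c * ∑ i, ⟪Yk1 i - Yk i, Xk1 - Xs⟫
      = c * (∑ i, ⟪Yk1 i - Yk i, Xk1 - Yk1 i⟫) + c * ∑ i, ⟪Yk1 i - Yk i, Yk1 i - Xs⟫ := by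
    rw [hME]; ring
  have hM : 0 ≤ (∑ i, ⟪Λk1 i - Λs i, Xk1 - Xs⟫) - (∑ i, ⟪Λk1 i - Λs i, Yk1 i - Xs⟫)
      - c * ∑ i, ⟪Yk1 i - Yk i, Yk1 i - Xs⟫ := by
    have := mul_nonneg hc0.le hMF
    linarith [hE2, hMB, hdistr, this]
  -- the per-index algebraic identity, summed
  have h3 : ∀ i : Fin N, ‖Λk i - Λs i‖^2 - ‖Λk1 i - Λs i‖^2
      - c^2*((‖Xk1 - Yk1 i‖^2 + ‖Yk1 i - Yk i‖^2) + ‖Yk1 i - Xs‖^2 - ‖Yk i - Xs‖^2)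
      = 2*c*(⟪Λk1 i - Λs i, Xk1 - Xs⟫ - ⟪Λk1 i - Λs i, Yk1 i - Xs⟫
          - c * ⟪Yk1 i - Yk i, Yk1 i - Xs⟫) := by
    intro i
    have e1 : Λk i - Λs i = (Λk1 i - Λs i) + c • (Xk1 - Yk1 i) := by
      rw [hrec i]; abel
    have e2 : Yk i - Xs = (Yk1 i - Xs) - (Yk1 i - Yk i) := by abel
    have e3 : Xk1 - Xs = (Xk1 - Yk1 i) + (Yk1 i - Xs) := by abel
    rw [e1, e2, e3]
    exact aux_ident c (Λk1 i - Λs i) (Xk1 - Yk1 i) (Yk1 i - Yk i) (Yk1 i - Xs)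
  have h4 := Finset.sum_congr rfl (fun i (_ : i ∈ Finset.univ) => h3 i)
  simp only [Finset.sum_sub_distrib, Finset.sum_add_distrib, ← Finset.mul_sum] at h4
  -- final assembly
  have hPA : 0 ≤ ∑ i, ‖Λk1 i - Λs i‖^2 := Finset.sum_nonneg fun i _ => by positivity
  have hinv : (c'⁻¹)^2 ≤ (c⁻¹)^2 := by
    have h0 : 0 < c' := lt_of_lt_of_le hc0 hcc'
    have := inv_anti₀ hc0 hcc'
    have h0' : (0:ℝ) ≤ c'⁻¹ := by positivity
    nlinarith
  have h6 : (c'⁻¹)^2 * (∑ i, ‖Λk1 i - Λs i‖^2) ≤ (c⁻¹)^2 * ∑ i, ‖Λk1 i - Λs i‖^2 :=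
    mul_le_mul_of_nonneg_right hinv hPA
  have h7 : (c⁻¹)^2 * c^2 = 1 := by field_simp
  have hMnn : 0 ≤ (c⁻¹)^2 * (2*c*((∑ i, ⟪Λk1 i - Λs i, Xk1 - Xs⟫)
      - (∑ i, ⟪Λk1 i - Λs i, Yk1 i - Xs⟫) - c * ∑ i, ⟪Yk1 i - Yk i, Yk1 i - Xs⟫)) :=
    mul_nonneg (sq_nonneg _) (mul_nonneg (by linarith) hM)
  have h9 : (c⁻¹)^2 * (∑ i, ‖Λk i - Λs i‖^2) - (c⁻¹)^2 * (∑ i, ‖Λk1 i - Λs i‖^2)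
      - ((∑ i, ‖Xk1 - Yk1 i‖^2) + (∑ i, ‖Yk1 i - Yk i‖^2)
        + (∑ i, ‖Yk1 i - Xs‖^2) - (∑ i, ‖Yk i - Xs‖^2))
      = (c⁻¹)^2 * (2*c*((∑ i, ⟪Λk1 i - Λs i, Xk1 - Xs⟫)
      - (∑ i, ⟪Λk1 i - Λs i, Yk1 i - Xs⟫) - c * ∑ i, ⟪Yk1 i - Yk i, Yk1 i - Xs⟫)) := by
    linear_combination (c⁻¹)^2 * h4 + ((∑ i, ‖Xk1 - Yk1 i‖^2) + (∑ i, ‖Yk1 i - Yk i‖^2)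
        + (∑ i, ‖Yk1 i - Xs‖^2) - (∑ i, ‖Yk i - Xs‖^2)) * h7
  rw [Finset.sum_add_distrib]
  linarith [h9, hMnn, h6]

/-- Lemma 5.3 (i): the vanishing limits along a SALM trajectory with nondecreasing
penalty parameters. -/
theorem salm_vanishing
    {T : Type*} [NormedAddCommGroup T] [InnerProductSpace ℝ T] [FiniteDimensional ℝ T]
    {N : ℕ} (hN : 0 < N)
    (B : Set T) (hBne : B.Nonempty) (hBclosed : IsClosed B) (hBconv : Convex ℝ B)
    (h : Fin N → T → ℝ) (hconv : ∀ i, ConvexOn ℝ Set.univ (h i))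
    (X : ℕ → T) (Y Λ : Fin N → ℕ → T) (β : ℕ → ℝ)
    (hXB : ∀ k : ℕ, X (k + 1) ∈ B) (hβ : ∀ k : ℕ, 0 < β k)
    (ha : ∀ k : ℕ, (∑ i, (Λ i k - β k • (X (k + 1) - Y i k))) ∈ normalCone B (X (k + 1)))
    (hb : ∀ (k : ℕ) (i : Fin N), -(Λ i (k + 1)) ∈ subdiff (h i) (Y i (k + 1)))
    (hc : ∀ (k : ℕ) (i : Fin N), Λ i (k + 1) = Λ i k - β k • (X (k + 1) - Y i (k + 1)))
    (Xs : T) (Ys Λs : Fin N → T)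
    (hXsB : Xs ∈ B) (hΛs : (∑ i, Λs i) ∈ normalCone B Xs)
    (hbs : ∀ i, -(Λs i) ∈ subdiff (h i) (Ys i))
    (hYs : ∀ i, Ys i = Xs)
    (hmono : ∀ k : ℕ, β k ≤ β (k + 1))
    : ∀ i : Fin N,
      Tendsto (fun k : ℕ => ‖X (k + 1) - Y i (k + 1)‖) atTop (𝓝 0) ∧
      Tendsto (fun k : ℕ => ‖Y i (k + 1) - Y i k‖) atTop (𝓝 0) ∧
      Tendsto (fun k : ℕ => (β k)⁻¹ * ‖Λ i (k + 1) - Λ i k‖) atTop (𝓝 0) := by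
  -- the Lyapunov function
  obtain ⟨Φ, hΦ⟩ : ∃ Φ : ℕ → ℝ, ∀ k,
      Φ k = ∑ j, (((β k)⁻¹)^2 * ‖Λ j k - Λs j‖^2 + ‖Y j k - Xs‖^2) :=
    ⟨_, fun k => rfl⟩
  have hΦnn : ∀ k, 0 ≤ Φ k := by
    intro k; rw [hΦ k]
    exact Finset.sum_nonneg fun j _ => by positivity
  -- F1 : from the two subgradient conditions at step k+1 and at the KKT point
  have hF1 : ∀ (k : ℕ) (i : Fin N), ⟪Λ i (k+1) - Λs i, Y i (k+1) - Xs⟫ ≤ 0 := by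
    intro k i
    have e1 := hb k i Xs
    have e2 := hbs i (Y i (k+1))
    rw [hYs i] at e2
    simp only [inner_sub_left, inner_sub_right, inner_neg_left, inner_neg_right] at e1 e2 ⊢
    linarith [real_inner_comm (Λ i (k+1)) Xs, real_inner_comm (Λ i (k+1)) (Y i (k+1)),
      real_inner_comm (Λs i) Xs, real_inner_comm (Λs i) (Y i (k+1))]
  -- F3 : monotonicity of the subdifferential between consecutive iterates
  have hF3 : ∀ (m : ℕ) (i : Fin N), 0 ≤ ⟪Y i (m+1+1) - Y i (m+1), X (m+1+1) - Y i (m+1+1)⟫ := by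
    intro m i
    have e1 := hb (m+1) i (Y i (m+1))
    have e2 := hb m i (Y i (m+1+1))
    have e4 : 0 ≤ ⟪Y i (m+1+1) - Y i (m+1), Λ i (m+1) - Λ i (m+1+1)⟫ := by
      simp only [inner_sub_left, inner_sub_right, inner_neg_left, inner_neg_right] at e1 e2 ⊢
      linarith [real_inner_comm (Λ i (m+1)) (Y i (m+1)), real_inner_comm (Λ i (m+1)) (Y i (m+1+1)),
        real_inner_comm (Λ i (m+1+1)) (Y i (m+1)), real_inner_comm (Λ i (m+1+1)) (Y i (m+1+1))]
    have e3 : Λ i (m+1) - Λ i (m+1+1) = β (m+1) • (X (m+1+1) - Y i (m+1+1)) := by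
      rw [hc (m+1) i]; abel
    rw [e3, real_inner_smul_right] at e4
    nlinarith [hβ (m+1), e4]
  -- the key decrease estimate
  have key : ∀ m : ℕ, ∑ j, (‖X (m+1+1) - Y j (m+1+1)‖^2 + ‖Y j (m+1+1) - Y j (m+1)‖^2)
      ≤ Φ (m+1) - Φ (m+1+1) := by
    intro m
    have hks := key_step (β (m+1)) (β (m+1+1)) (hβ (m+1)) (hmono (m+1))
      (X (m+1+1)) Xs (fun j => Y j (m+1)) (fun j => Y j (m+1+1))
      (fun j => Λ j (m+1)) (fun j => Λ j (m+1+1)) Λs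
      (fun j => hc (m+1) j) (fun j => hF1 (m+1) j) (fun j => hF3 m j)
      (ha (m+1) Xs hXsB) (hΛs (X (m+1+1)) (hXB (m+1)))
    have hΦ1 : Φ (m+1) = ((β (m+1))⁻¹)^2 * (∑ j, ‖Λ j (m+1) - Λs j‖^2)
        + ∑ j, ‖Y j (m+1) - Xs‖^2 := by
      rw [hΦ (m+1), Finset.sum_add_distrib, Finset.mul_sum]
    have hΦ2 : Φ (m+1+1) = ((β (m+1+1))⁻¹)^2 * (∑ j, ‖Λ j (m+1+1) - Λs j‖^2)
        + ∑ j, ‖Y j (m+1+1) - Xs‖^2 := by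
      rw [hΦ (m+1+1), Finset.sum_add_distrib, Finset.mul_sum]
    rw [hΦ1, hΦ2]
    exact hks
  -- convergence of the Lyapunov values
  have hφanti : Antitone (fun m => Φ (m+1)) := by
    apply antitone_nat_of_succ_le
    intro m
    have h0 : 0 ≤ ∑ j, (‖X (m+1+1) - Y j (m+1+1)‖^2 + ‖Y j (m+1+1) - Y j (m+1)‖^2) :=
      Finset.sum_nonneg fun j _ => by positivity
    have := key m
    show Φ (m+1+1) ≤ Φ (m+1)
    linarith
  have hbb : BddBelow (Set.range fun m => Φ (m+1)) := by
    refine ⟨0, ?_⟩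
    rintro x ⟨m, rfl⟩
    exact hΦnn (m+1)
  have hconv : Tendsto (fun m => Φ (m+1)) atTop (𝓝 (⨅ m, Φ (m+1))) :=
    tendsto_atTop_ciInf hφanti hbb
  have hdiff : Tendsto (fun m => Φ (m+1) - Φ (m+1+1)) atTop (𝓝 0) := by
    have h2 : Tendsto (fun m => Φ (m+1+1)) atTop (𝓝 (⨅ m, Φ (m+1))) :=
      hconv.comp (tendsto_add_atTop_nat 1)
    simpa using hconv.sub h2
  have hStend : Tendsto (fun m => ∑ j, (‖X (m+1+1) - Y j (m+1+1)‖^2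
      + ‖Y j (m+1+1) - Y j (m+1)‖^2)) atTop (𝓝 0) := by
    refine squeeze_zero (fun m => Finset.sum_nonneg fun j _ => by positivity)
      (fun m => key m) hdiff
  intro i
  -- bounds by the single summand
  have hle : ∀ m : ℕ, ‖X (m+1+1) - Y i (m+1+1)‖^2 + ‖Y i (m+1+1) - Y i (m+1)‖^2
      ≤ ∑ j, (‖X (m+1+1) - Y j (m+1+1)‖^2 + ‖Y j (m+1+1) - Y j (m+1)‖^2) := by
    intro m
    exact Finset.single_le_sum (f := fun j => ‖X (m+1+1) - Y j (m+1+1)‖^2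
      + ‖Y j (m+1+1) - Y j (m+1)‖^2) (fun j _ => by positivity) (Finset.mem_univ i)
  have lim1sq : Tendsto (fun m => ‖X (m+1+1) - Y i (m+1+1)‖^2) atTop (𝓝 0) := by
    refine squeeze_zero (fun m => by positivity) (fun m => ?_) hStend
    have := hle m
    nlinarith [sq_nonneg ‖Y i (m+1+1) - Y i (m+1)‖]
  have lim2sq : Tendsto (fun m => ‖Y i (m+1+1) - Y i (m+1)‖^2) atTop (𝓝 0) := by
    refine squeeze_zero (fun m => by positivity) (fun m => ?_) hStend
    have := hle m
    nlinarith [sq_nonneg ‖X (m+1+1) - Y i (m+1+1)‖]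
  have lim1 : Tendsto (fun m => ‖X (m+1+1) - Y i (m+1+1)‖) atTop (𝓝 0) := by
    have := lim1sq.sqrt
    simpa [Real.sqrt_sq (norm_nonneg _)] using this
  have lim2 : Tendsto (fun m => ‖Y i (m+1+1) - Y i (m+1)‖) atTop (𝓝 0) := by
    have := lim2sq.sqrt
    simpa [Real.sqrt_sq (norm_nonneg _)] using this
  have t1 : Tendsto (fun k : ℕ => ‖X (k+1) - Y i (k+1)‖) atTop (𝓝 0) :=
    (tendsto_add_atTop_iff_nat 1).mp lim1
  have t2 : Tendsto (fun k : ℕ => ‖Y i (k+1) - Y i k‖) atTop (𝓝 0) :=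
    (tendsto_add_atTop_iff_nat 1).mp lim2
  refine ⟨t1, t2, ?_⟩
  have heq : (fun k : ℕ => (β k)⁻¹ * ‖Λ i (k+1) - Λ i k‖)
      = fun k : ℕ => ‖X (k+1) - Y i (k+1)‖ := by
    funext k
    have e : Λ i (k+1) - Λ i k = -(β k • (X (k+1) - Y i (k+1))) := by
      rw [hc k i]; abel
    rw [e, norm_neg, norm_smul, Real.norm_eq_abs, abs_of_pos (hβ k), ← mul_assoc,
      inv_mul_cancel₀ (hβ k).ne', one_mul]
  rw [heq]
  exact t1
end

section
/- Given a SALM trajectory with β^{k+1} ≥ β^k for all k ≥ 0 and a KKT point (X*, Y_1*, …, Y_N*, Λ_1*, …, Λ_N*), the sequences {Y_i^k} (for each i) and {X^k} are bounded; if moreover each h_i is Lipschitz continuous, then the sequences {Λ_i^k} (for each i) are also bounded. -/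
open RealInnerProductSpace

lemma salm_ptwise {T : Type*} [NormedAddCommGroup T] [InnerProductSpace ℝ T]
    (β : ℝ) (a p q r : T) :
    (‖a‖^2 + β^2*‖r‖^2) - (‖a - β•(p-q)‖^2 + β^2*‖q‖^2)
      = 2*β*(⟪a,p⟫ - β*⟪p-r,p⟫) - 2*β*⟪q, a - β•(p-q)⟫ + β^2*‖p-r‖^2 := by
  simp only [← real_inner_self_eq_norm_sq, inner_sub_left, inner_sub_right,
    real_inner_smul_left, real_inner_smul_right]
  rw [real_inner_comm p r, real_inner_comm a p, real_inner_comm a q, real_inner_comm p q]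
  ring

lemma sq_le_imp_le_sqrt {x c : ℝ} (hx : 0 ≤ x) (h : x^2 ≤ c) : x ≤ Real.sqrt c := by
  have hc : 0 ≤ c := le_trans (sq_nonneg x) h
  nlinarith [Real.sq_sqrt hc, Real.sqrt_nonneg c]

lemma le_of_sq_le_sq' {x y : ℝ} (hx : 0 ≤ x) (hy : 0 ≤ y) (h : x^2 ≤ y^2) : x ≤ y := by
  nlinarith

lemma subgrad_norm_le {T : Type*} [NormedAddCommGroup T] [InnerProductSpace ℝ T]
    {h : T → ℝ} {L : NNReal} (hL : LipschitzWith L h) {Yv Q : T}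
    (hQ : Q ∈ subdiff h Yv) : ‖Q‖ ≤ L := by
  have h1 := hQ (Yv + Q)
  simp only [add_sub_cancel_left, real_inner_self_eq_norm_sq] at h1
  have h2 : h (Yv + Q) - h Yv ≤ L * ‖Q‖ := by
    have hd := hL.dist_le_mul (Yv + Q) Yv
    rw [dist_eq_norm, dist_eq_norm, add_sub_cancel_left] at hd
    calc h (Yv + Q) - h Yv ≤ |h (Yv + Q) - h Yv| := le_abs_self _
      _ = ‖h (Yv + Q) - h Yv‖ := rfl
      _ ≤ L * ‖Q‖ := hd
  nlinarith [norm_nonneg Q, NNReal.coe_nonneg L]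

/-- Lemma 5.3 (ii): boundedness of the SALM iterates; together with boundedness of the
multipliers when each h_i is Lipschitz continuous. -/
theorem salm_bounded
    {T : Type*} [NormedAddCommGroup T] [InnerProductSpace ℝ T] [FiniteDimensional ℝ T]
    {N : ℕ} (hN : 0 < N)
    (B : Set T) (hBne : B.Nonempty) (hBclosed : IsClosed B) (hBconv : Convex ℝ B)
    (h : Fin N → T → ℝ) (hconv : ∀ i, ConvexOn ℝ Set.univ (h i))
    (X : ℕ → T) (Y Λ : Fin N → ℕ → T) (β : ℕ → ℝ)
    (hXB : ∀ k : ℕ, X (k + 1) ∈ B) (hβ : ∀ k : ℕ, 0 < β k)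
    (ha : ∀ k : ℕ, (∑ i, (Λ i k - β k • (X (k + 1) - Y i k))) ∈ normalCone B (X (k + 1)))
    (hb : ∀ (k : ℕ) (i : Fin N), -(Λ i (k + 1)) ∈ subdiff (h i) (Y i (k + 1)))
    (hc : ∀ (k : ℕ) (i : Fin N), Λ i (k + 1) = Λ i k - β k • (X (k + 1) - Y i (k + 1)))
    (Xs : T) (Ys Λs : Fin N → T)
    (hXsB : Xs ∈ B) (hΛs : (∑ i, Λs i) ∈ normalCone B Xs)
    (hbs : ∀ i, -(Λs i) ∈ subdiff (h i) (Ys i))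
    (hYs : ∀ i, Ys i = Xs)
    (hmono : ∀ k : ℕ, β k ≤ β (k + 1))
    : (∀ i : Fin N, Bornology.IsBounded (Set.range (Y i))) ∧
      Bornology.IsBounded (Set.range X) ∧
      ((∀ i : Fin N, ∃ L : NNReal, LipschitzWith L (h i)) →
        ∀ i : Fin N, Bornology.IsBounded (Set.range (Λ i))) := by
  -- F2 : monotonicity of the subdifferential
  have F2 : ∀ (k : ℕ) (i : Fin N), ⟪Y i (k+1) - Xs, Λ i (k+1) - Λs i⟫ ≤ 0 := by
    intro k i
    have h1 := hb k i Xs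
    have h2 := hbs i (Y i (k+1))
    rw [hYs i] at h2
    have e : ⟪Y i (k+1) - Xs, Λ i (k+1) - Λs i⟫
        = ⟪Xs - Y i (k+1), -(Λ i (k+1))⟫ + ⟪Y i (k+1) - Xs, -(Λs i)⟫ := by
      simp only [inner_sub_left, inner_sub_right, inner_neg_right]
      ring
    rw [e]; linarith
  -- F3 : combined normal cone inequality
  have F3 : ∀ k : ℕ, 0 ≤ ∑ i, (⟪Λ i k - Λs i, X (k+1) - Xs⟫
      - β k * ⟪(X (k+1) - Xs) - (Y i k - Xs), X (k+1) - Xs⟫) := by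
    intro k
    have h1 := ha k Xs hXsB
    have h2 := hΛs (X (k+1)) (hXB k)
    have e : ∑ i, (⟪Λ i k - Λs i, X (k+1) - Xs⟫
        - β k * ⟪(X (k+1) - Xs) - (Y i k - Xs), X (k+1) - Xs⟫)
        = -⟪∑ i, (Λ i k - β k • (X (k + 1) - Y i k)), Xs - X (k+1)⟫
          - ⟪∑ i, Λs i, X (k+1) - Xs⟫ := by
      rw [sum_inner, sum_inner, ← Finset.sum_neg_distrib, ← Finset.sum_sub_distrib]
      apply Finset.sum_congr rfl
      intro i _
      have e2 : (X (k+1) - Xs) - (Y i k - Xs) = X (k+1) - Y i k := by abel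
      rw [e2]
      simp only [inner_sub_left, inner_sub_right, real_inner_smul_left, inner_neg_right]
      ring
    rw [e]; linarith
  -- the per-step contraction inequality
  have step : ∀ k : ℕ,
      ∑ i, (‖Λ i (k+1) - Λs i‖^2 + (β k)^2 * ‖Y i (k+1) - Xs‖^2)
        ≤ ∑ i, (‖Λ i k - Λs i‖^2 + (β k)^2 * ‖Y i k - Xs‖^2) := by
    intro k
    have hbq : ∀ i : Fin N, Λ i (k+1) - Λs i
        = (Λ i k - Λs i) - β k • ((X (k+1) - Xs) - (Y i (k+1) - Xs)) := by
      intro i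
      have e2 : (X (k+1) - Xs) - (Y i (k+1) - Xs) = X (k+1) - Y i (k+1) := by abel
      rw [e2, hc k i]
      abel
    have ident : ∀ i : Fin N,
        (‖Λ i k - Λs i‖^2 + (β k)^2*‖Y i k - Xs‖^2)
          - (‖Λ i (k+1) - Λs i‖^2 + (β k)^2*‖Y i (k+1) - Xs‖^2)
        = 2*(β k)*(⟪Λ i k - Λs i, X (k+1) - Xs⟫
            - β k*⟪(X (k+1) - Xs) - (Y i k - Xs), X (k+1) - Xs⟫)
          - 2*(β k)*⟪Y i (k+1) - Xs, Λ i (k+1) - Λs i⟫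
          + (β k)^2*‖(X (k+1) - Xs) - (Y i k - Xs)‖^2 := by
      intro i
      rw [hbq i]
      exact salm_ptwise (β k) (Λ i k - Λs i) (X (k+1) - Xs) (Y i (k+1) - Xs) (Y i k - Xs)
    have sum_ident := Finset.sum_congr rfl (fun i (_ : i ∈ Finset.univ) => ident i)
    rw [Finset.sum_sub_distrib] at sum_ident
    have expand : ∑ i, (2*(β k)*(⟪Λ i k - Λs i, X (k+1) - Xs⟫
            - β k*⟪(X (k+1) - Xs) - (Y i k - Xs), X (k+1) - Xs⟫)
          - 2*(β k)*⟪Y i (k+1) - Xs, Λ i (k+1) - Λs i⟫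
          + (β k)^2*‖(X (k+1) - Xs) - (Y i k - Xs)‖^2)
        = 2*(β k)*(∑ i, (⟪Λ i k - Λs i, X (k+1) - Xs⟫
            - β k*⟪(X (k+1) - Xs) - (Y i k - Xs), X (k+1) - Xs⟫))
          - 2*(β k)*(∑ i, ⟪Y i (k+1) - Xs, Λ i (k+1) - Λs i⟫)
          + (β k)^2*(∑ i, ‖(X (k+1) - Xs) - (Y i k - Xs)‖^2) := by
      rw [Finset.sum_add_distrib, Finset.sum_sub_distrib, Finset.mul_sum, Finset.mul_sum,
        Finset.mul_sum]
    rw [expand] at sum_ident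
    have hS2 : (∑ i, ⟪Y i (k+1) - Xs, Λ i (k+1) - Λs i⟫) ≤ 0 :=
      Finset.sum_nonpos (fun i _ => F2 k i)
    have hS3 : (0:ℝ) ≤ ∑ i, ‖(X (k+1) - Xs) - (Y i k - Xs)‖^2 :=
      Finset.sum_nonneg (fun i _ => sq_nonneg _)
    have hβk := hβ k
    nlinarith [F3 k, mul_nonneg (le_of_lt hβk) (neg_nonneg.mpr hS2),
      mul_nonneg (mul_nonneg (le_of_lt hβk) (le_of_lt hβk)) hS3,
      mul_nonneg (le_of_lt hβk) (F3 k)]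
  -- the Lyapunov function
  set Ψ : ℕ → ℝ := fun k => ∑ i, (‖Λ i k - Λs i‖^2/(β k)^2 + ‖Y i k - Xs‖^2) with hΨ
  have hΨnonneg : ∀ k, 0 ≤ Ψ k := by
    intro k
    apply Finset.sum_nonneg
    intro i _
    positivity
  have hΨrw : ∀ k : ℕ, ∀ c : ℝ, 0 < c →
      ∑ i, (‖Λ i k - Λs i‖^2 + c^2 * ‖Y i k - Xs‖^2)
        = c^2 * ∑ i, (‖Λ i k - Λs i‖^2/c^2 + ‖Y i k - Xs‖^2) := by
    intro k c hc
    rw [Finset.mul_sum]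
    apply Finset.sum_congr rfl
    intro i _
    field_simp
  have mono : ∀ k, Ψ (k+1) ≤ Ψ k := by
    intro k
    have hk := hβ k
    have hk1 := hβ (k+1)
    have hsq : (β k)^2 ≤ (β (k+1))^2 := by nlinarith [hmono k]
    have h1 : Ψ (k+1) ≤ ∑ i, (‖Λ i (k+1) - Λs i‖^2/(β k)^2 + ‖Y i (k+1) - Xs‖^2) := by
      apply Finset.sum_le_sum
      intro i _
      have : ‖Λ i (k+1) - Λs i‖^2/(β (k+1))^2 ≤ ‖Λ i (k+1) - Λs i‖^2/(β k)^2 :=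
        div_le_div_of_nonneg_left (sq_nonneg _) (by positivity) hsq
      linarith
    have h2 : ∑ i, (‖Λ i (k+1) - Λs i‖^2/(β k)^2 + ‖Y i (k+1) - Xs‖^2) ≤ Ψ k := by
      have hst := step k
      rw [hΨrw (k+1) (β k) hk, hΨrw k (β k) hk] at hst
      have hpos : (0:ℝ) < (β k)^2 := by positivity
      exact le_of_mul_le_mul_left hst hpos
    linarith
  have chain : ∀ k, Ψ k ≤ Ψ 0 := by
    intro k
    induction k with
    | zero => exact le_refl _
    | succ n ih => exact le_trans (mono n) ih
  set C := Real.sqrt (Ψ 0) with hCdef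
  have hC : 0 ≤ C := Real.sqrt_nonneg _
  have hC2 : C^2 = Ψ 0 := Real.sq_sqrt (hΨnonneg 0)
  have term_le : ∀ (i : Fin N) (k : ℕ),
      ‖Λ i k - Λs i‖^2/(β k)^2 + ‖Y i k - Xs‖^2 ≤ Ψ 0 := by
    intro i k
    refine le_trans ?_ (chain k)
    exact Finset.single_le_sum (f := fun j => ‖Λ j k - Λs j‖^2/(β k)^2 + ‖Y j k - Xs‖^2)
      (fun j _ => add_nonneg (div_nonneg (sq_nonneg _) (sq_nonneg _)) (sq_nonneg _))
      (Finset.mem_univ i)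
  have hYbd : ∀ (i : Fin N) (k : ℕ), ‖Y i k - Xs‖ ≤ C := by
    intro i k
    apply sq_le_imp_le_sqrt (norm_nonneg _)
    have := term_le i k
    have : ‖Y i k - Xs‖^2 ≤ Ψ 0 := by
      have hpos : (0:ℝ) ≤ ‖Λ i k - Λs i‖^2/(β k)^2 := by positivity
      linarith [term_le i k]
    exact this
  have hAbd : ∀ (i : Fin N) (k : ℕ), ‖Λ i k - Λs i‖ ≤ β k * C := by
    intro i k
    have hk := hβ k
    apply le_of_sq_le_sq' (norm_nonneg _) (mul_nonneg hk.le hC)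
    have h1 : ‖Λ i k - Λs i‖^2/(β k)^2 ≤ Ψ 0 := by
      have hpos : (0:ℝ) ≤ ‖Y i k - Xs‖^2 := sq_nonneg _
      linarith [term_le i k]
    have hk2 : (0:ℝ) < (β k)^2 := pow_pos hk 2
    rw [div_le_iff₀ hk2] at h1
    calc ‖Λ i k - Λs i‖^2 ≤ Ψ 0 * (β k)^2 := h1
      _ = (β k * C)^2 := by rw [mul_pow, hC2]; ring
  have hBbd : ∀ (i : Fin N) (k : ℕ), ‖Λ i (k+1) - Λs i‖ ≤ β k * C := by
    intro i k
    have hk := hβ k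
    apply le_of_sq_le_sq' (norm_nonneg _) (mul_nonneg hk.le hC)
    have h1 : ‖Λ i (k+1) - Λs i‖^2
        ≤ ∑ j, (‖Λ j (k+1) - Λs j‖^2 + (β k)^2 * ‖Y j (k+1) - Xs‖^2) := by
      refine le_trans ?_ (Finset.single_le_sum
        (f := fun j => ‖Λ j (k+1) - Λs j‖^2 + (β k)^2 * ‖Y j (k+1) - Xs‖^2)
        (fun j _ => add_nonneg (sq_nonneg _) (mul_nonneg (sq_nonneg _) (sq_nonneg _)))
        (Finset.mem_univ i))
      show ‖Λ i (k+1) - Λs i‖^2 ≤ ‖Λ i (k+1) - Λs i‖^2 + (β k)^2 * ‖Y i (k+1) - Xs‖^2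
      nlinarith [sq_nonneg ‖Y i (k+1) - Xs‖, sq_nonneg (β k)]
    have h2 := step k
    rw [hΨrw k (β k) (hβ k)] at h2
    have h3 : (β k)^2 * Ψ k ≤ (β k)^2 * Ψ 0 :=
      mul_le_mul_of_nonneg_left (chain k) (by positivity)
    calc ‖Λ i (k+1) - Λs i‖^2 ≤ (β k)^2 * Ψ 0 := by linarith
      _ = (β k * C)^2 := by rw [mul_pow, hC2]
  -- boundedness of X
  have hXbd : ∀ k : ℕ, ‖X (k+1) - Xs‖ ≤ 3*C := by
    intro k
    have hβk := hβ k
    set i0 : Fin N := ⟨0, hN⟩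
    have e : X (k+1) - Xs = (Y i0 (k+1) - Xs)
        + (β k)⁻¹ • ((Λ i0 k - Λs i0) - (Λ i0 (k+1) - Λs i0)) := by
      have e2 : (Λ i0 k - Λs i0) - (Λ i0 (k+1) - Λs i0) = Λ i0 k - Λ i0 (k+1) := by abel
      rw [e2, hc k i0, sub_sub_cancel, smul_smul, inv_mul_cancel₀ (ne_of_gt hβk), one_smul]
      abel
    rw [e]
    have h1 : ‖(β k)⁻¹ • ((Λ i0 k - Λs i0) - (Λ i0 (k+1) - Λs i0))‖
        = (β k)⁻¹ * ‖(Λ i0 k - Λs i0) - (Λ i0 (k+1) - Λs i0)‖ := by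
      rw [norm_smul, Real.norm_eq_abs, abs_of_pos (inv_pos.mpr hβk)]
    have h2 : ‖(Λ i0 k - Λs i0) - (Λ i0 (k+1) - Λs i0)‖ ≤ 2 * (β k * C) := by
      calc ‖(Λ i0 k - Λs i0) - (Λ i0 (k+1) - Λs i0)‖
          ≤ ‖Λ i0 k - Λs i0‖ + ‖Λ i0 (k+1) - Λs i0‖ := norm_sub_le _ _
        _ ≤ β k * C + β k * C := add_le_add (hAbd i0 k) (hBbd i0 k)
        _ = 2 * (β k * C) := by ring
    calc ‖(Y i0 (k+1) - Xs) + (β k)⁻¹ • ((Λ i0 k - Λs i0) - (Λ i0 (k+1) - Λs i0))‖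
        ≤ ‖Y i0 (k+1) - Xs‖ + ‖(β k)⁻¹ • ((Λ i0 k - Λs i0) - (Λ i0 (k+1) - Λs i0))‖ :=
          norm_add_le _ _
      _ ≤ C + (β k)⁻¹ * (2 * (β k * C)) := by
          rw [h1]
          exact add_le_add (hYbd i0 (k+1))
            (mul_le_mul_of_nonneg_left h2 (le_of_lt (inv_pos.mpr hβk)))
      _ = 3*C := by field_simp; ring
  refine ⟨?_, ?_, ?_⟩
  · intro i
    rw [isBounded_iff_forall_norm_le]
    refine ⟨‖Xs‖ + C, ?_⟩
    rintro x ⟨k, rfl⟩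
    calc ‖Y i k‖ = ‖(Y i k - Xs) + Xs‖ := by rw [sub_add_cancel]
      _ ≤ ‖Y i k - Xs‖ + ‖Xs‖ := norm_add_le _ _
      _ ≤ ‖Xs‖ + C := by linarith [hYbd i k]
  · rw [isBounded_iff_forall_norm_le]
    refine ⟨max (‖X 0‖) (‖Xs‖ + 3*C), ?_⟩
    rintro x ⟨k, rfl⟩
    cases k with
    | zero => exact le_max_left _ _
    | succ n =>
      refine le_trans ?_ (le_max_right _ _)
      calc ‖X (n+1)‖ = ‖(X (n+1) - Xs) + Xs‖ := by rw [sub_add_cancel]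
        _ ≤ ‖X (n+1) - Xs‖ + ‖Xs‖ := norm_add_le _ _
        _ ≤ ‖Xs‖ + 3*C := by linarith [hXbd n]
  · intro hLip i
    obtain ⟨L, hL⟩ := hLip i
    rw [isBounded_iff_forall_norm_le]
    refine ⟨max (‖Λ i 0‖) L, ?_⟩
    rintro x ⟨k, rfl⟩
    cases k with
    | zero => exact le_max_left _ _
    | succ n =>
      have := subgrad_norm_le hL (hb n i)
      rw [norm_neg] at this
      exact le_trans this (le_max_right _ _)
end

section
/- Suppose each h_i is Lipschitz continuous, a KKT point (X*, Y_1*, …, Y_N*, Λ_1*, …, Λ_N*) exists, and the SALM trajectory satisfies β^{k+1} ≥ β^k for all k ≥ 0 and ∑_{k=0}^{∞} 1/β^k = +∞. Then there exists X̂ ∈ B such that X^k → X̂ and Y_i^k → X̂ for every i ∈ {1, …, N} as k → ∞, and X̂ is an optimal solution of the problem min_{X ∈ B} ∑_{i=1}^N h_i(X); that is, ∑_{i=1}^N h_i(X̂) ≤ ∑_{i=1}^N h_i(X) for all X ∈ B. -/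
open RealInnerProductSpace

open Filter Topology

section SalmAux

variable {T : Type*} [NormedAddCommGroup T] [InnerProductSpace ℝ T]

lemma key_ident (a b c f : T) (β : ℝ) :
    ‖a - β•(f-c)‖^2 + β^2*‖c‖^2 + β^2*‖f-b‖^2
      + 2*β*(⟪a - β•(f-b), f⟫ + ⟪-(a - β•(f-c)), c⟫)
    = ‖a‖^2 + β^2*‖b‖^2 := by
  simp only [← real_inner_self_eq_norm_sq, inner_sub_left, inner_sub_right,
    real_inner_smul_left, real_inner_smul_right, inner_neg_left]
  simp only [real_inner_comm f a, real_inner_comm c a, real_inner_comm b a,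
    real_inner_comm c f, real_inner_comm b f, real_inner_comm c b]
  ring

lemma subdiff_norm_le {h : T → ℝ} {L : NNReal} (hL : LipschitzWith L h)
    {Yv Qv : T} (hQ : Qv ∈ subdiff h Yv) : ‖Qv‖ ≤ L := by
  have h1 := hQ (Yv + Qv)
  simp only [add_sub_cancel_left] at h1
  rw [real_inner_self_eq_norm_sq] at h1
  have h2 : h (Yv + Qv) - h Yv ≤ L * ‖Qv‖ := by
    have := hL.dist_le_mul (Yv + Qv) Yv
    have hd : dist (Yv + Qv) Yv = ‖Qv‖ := by
      simp [dist_eq_norm]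
    rw [hd] at this
    calc h (Yv + Qv) - h Yv ≤ |h (Yv + Qv) - h Yv| := le_abs_self _
      _ = dist (h (Yv + Qv)) (h Yv) := (Real.dist_eq _ _).symm
      _ ≤ L * ‖Qv‖ := this
  have h3 : ‖Qv‖^2 ≤ L * ‖Qv‖ := by linarith
  rcases eq_or_lt_of_le (norm_nonneg Qv) with hz | hz
  · rw [← hz]; positivity
  · nlinarith

lemma exists_subseq_tendsto_zero {f : ℕ → ℝ} (hf : ∀ k, 0 ≤ f k)
    (hfreq : ∀ ε > (0:ℝ), ∃ᶠ k in atTop, f k < ε) :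
    ∃ φ : ℕ → ℕ, StrictMono φ ∧ Tendsto (f ∘ φ) atTop (𝓝 0) := by
  have hstep : ∀ (n : ℕ) (m : ℕ), ∃ k, m < k ∧ f k < 1/(n+1) := by
    intro n m
    have := (hfreq (1/(n+1)) (by positivity)).forall_exists_of_atTop (m+1)
    obtain ⟨k, hk1, hk2⟩ := this
    exact ⟨k, lt_of_lt_of_le (Nat.lt_succ_self m) hk1, hk2⟩
  choose g hg1 hg2 using hstep
  let φ : ℕ → ℕ := fun n => Nat.rec (g 0 0) (fun n ih => g (n+1) ih) n
  have hφmono : StrictMono φ := strictMono_nat_of_lt_succ (fun n => hg1 (n+1) (φ n))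
  refine ⟨φ, hφmono, ?_⟩
  have hb : ∀ n : ℕ, 1 ≤ n → f (φ n) < 1/(n+1) := by
    intro n hn
    match n, hn with
    | (m+1), _ => exact hg2 (m+1) (φ m)
  have h0 : Tendsto (fun n : ℕ => 1/((n:ℝ)+1)) atTop (𝓝 0) :=
    tendsto_one_div_add_atTop_nhds_zero_nat
  refine squeeze_zero' (Eventually.of_forall (fun n => hf _)) ?_ h0
  filter_upwards [eventually_ge_atTop 1] with n hn
  exact (hb n hn).le

lemma tendsto_of_normsq_zero {f : ℕ → T} {a : T}
    (h : Tendsto (fun k => ‖f k - a‖^2) atTop (𝓝 0)) : Tendsto f atTop (𝓝 a) := by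
  rw [tendsto_iff_norm_sub_tendsto_zero]
  have hs : Tendsto (fun k => Real.sqrt (‖f k - a‖^2)) atTop (𝓝 (Real.sqrt 0)) :=
    (Real.continuous_sqrt.tendsto 0).comp h
  simpa [Real.sqrt_sq (norm_nonneg _)] using hs

omit [InnerProductSpace ℝ T] in
lemma tendsto_zero_of_antitone_subseq {W : ℕ → ℝ} (hanti : ∀ k, W (k+1) ≤ W k)
    (hnn : ∀ k, 0 ≤ W k) {σ : ℕ → ℕ}
    (htend : Tendsto (fun j => W (σ j)) atTop (𝓝 0)) : Tendsto W atTop (𝓝 0) := by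
  have hA : Antitone W := antitone_nat_of_succ_le hanti
  rw [Metric.tendsto_atTop] at htend ⊢
  intro ε hε
  obtain ⟨J, hJ⟩ := htend ε hε
  refine ⟨σ J, fun k hk => ?_⟩
  have h1 := hJ J le_rfl
  rw [Real.dist_eq, sub_zero, abs_of_nonneg (hnn _)] at h1 ⊢
  exact lt_of_le_of_lt (hA hk) h1

lemma salm_div_helper {b : ℝ} (hb : 0 < b) (A A' C G Sp Bb : ℝ)
    (heq : A' + b^2*C + b^2*G + 2*b*Sp = A + b^2*Bb) :
    A'/b^2 + C + G + 2*Sp/b = A/b^2 + Bb := by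
  have hb' : b ≠ 0 := ne_of_gt hb
  field_simp
  linear_combination heq

lemma tendsto_sq_sum_zero {N : ℕ} {G : ℕ → ℝ} {g : Fin N → ℕ → T}
    (hle : ∀ i k, ‖g i k‖^2 ≤ G k) (hG : Tendsto G atTop (𝓝 0)) (i : Fin N) :
    Tendsto (g i) atTop (𝓝 0) := by
  apply tendsto_of_normsq_zero
  simp only [sub_zero]
  exact squeeze_zero' (Eventually.of_forall fun k => by positivity)
    (Eventually.of_forall fun k => hle i k) hG

end SalmAux

set_option maxHeartbeats 2000000 in
/-- Theorem 5.1 (abstract form): convergence of SALM. If each h_i is Lipschitz, a KKT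
point exists, the penalty parameters are nondecreasing and ∑ 1/β^k diverges, then the
whole SALM sequence converges to an optimal solution X̂ of min_{X ∈ B} ∑ h_i(X). -/
theorem salm_convergence
    {T : Type*} [NormedAddCommGroup T] [InnerProductSpace ℝ T] [FiniteDimensional ℝ T]
    {N : ℕ} (hN : 0 < N)
    (B : Set T) (hBne : B.Nonempty) (hBclosed : IsClosed B) (hBconv : Convex ℝ B)
    (h : Fin N → T → ℝ) (hconv : ∀ i, ConvexOn ℝ Set.univ (h i))
    (X : ℕ → T) (Y Λ : Fin N → ℕ → T) (β : ℕ → ℝ)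
    (hXB : ∀ k : ℕ, X (k + 1) ∈ B) (hβ : ∀ k : ℕ, 0 < β k)
    (ha : ∀ k : ℕ, (∑ i, (Λ i k - β k • (X (k + 1) - Y i k))) ∈ normalCone B (X (k + 1)))
    (hb : ∀ (k : ℕ) (i : Fin N), -(Λ i (k + 1)) ∈ subdiff (h i) (Y i (k + 1)))
    (hc : ∀ (k : ℕ) (i : Fin N), Λ i (k + 1) = Λ i k - β k • (X (k + 1) - Y i (k + 1)))
    (Xs : T) (Ys Λs : Fin N → T)
    (hXsB : Xs ∈ B) (hΛs : (∑ i, Λs i) ∈ normalCone B Xs)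
    (hbs : ∀ i, -(Λs i) ∈ subdiff (h i) (Ys i))
    (hYs : ∀ i, Ys i = Xs)
    (hLip : ∀ i : Fin N, ∃ L : NNReal, LipschitzWith L (h i))
    (hmono : ∀ k : ℕ, β k ≤ β (k + 1))
    (hdiv : ¬ Summable (fun k : ℕ => (β k)⁻¹))
    : ∃ Xhat : T, Xhat ∈ B ∧
        Tendsto X atTop (𝓝 Xhat) ∧
        (∀ i : Fin N, Tendsto (Y i) atTop (𝓝 Xhat)) ∧
        (∀ X' ∈ B, ∑ i, h i Xhat ≤ ∑ i, h i X') := by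
  classical
  choose L hL using hLip
  have hbs' : ∀ i, -(Λs i) ∈ subdiff (h i) Xs := fun i => hYs i ▸ hbs i
  -- nonnegativity of the two slack terms, for a general KKT pair
  have Pnn : ∀ (P : T) (Q : Fin N → T), (∀ i, -(Q i) ∈ subdiff (h i) P) → ∀ k : ℕ,
      0 ≤ ∑ i, ⟪-(Λ i (k+1) - Q i), Y i (k+1) - P⟫ := by
    intro P Q hQs k
    apply Finset.sum_nonneg
    intro i _
    have h1 := hb k i P
    have h2 := hQs i (Y i (k+1))
    have e1 : ⟪P - Y i (k+1), -(Λ i (k+1))⟫ = -⟪Y i (k+1) - P, -(Λ i (k+1))⟫ := by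
      rw [← inner_neg_left]; rw [neg_sub]
    have e2 : ⟪-(Λ i (k+1) - Q i), Y i (k+1) - P⟫
        = ⟪Y i (k+1) - P, -(Λ i (k+1))⟫ - ⟪Y i (k+1) - P, -(Q i)⟫ := by
      rw [real_inner_comm]
      simp only [inner_neg_right, inner_sub_right]
      ring
    rw [e2]
    rw [e1] at h1
    linarith
  have Snn : ∀ (P : T) (Q : Fin N → T), P ∈ B → ((∑ i, Q i) ∈ normalCone B P) → ∀ k : ℕ,
      0 ≤ ∑ i, ⟪(Λ i k - β k • (X (k+1) - Y i k)) - Q i, X (k+1) - P⟫ := by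
    intro P Q hP hQ k
    have e1 : ∑ i, ⟪(Λ i k - β k • (X (k+1) - Y i k)) - Q i, X (k+1) - P⟫
        = ⟪∑ i, (Λ i k - β k • (X (k+1) - Y i k)), X (k+1) - P⟫
          - ⟪∑ i, Q i, X (k+1) - P⟫ := by
      rw [← inner_sub_left, ← Finset.sum_sub_distrib, sum_inner]
    rw [e1]
    have h1 := ha k P hP
    have h2 := hQ (X (k+1)) (hXB k)
    have e2 : ⟪∑ i, (Λ i k - β k • (X (k+1) - Y i k)), X (k+1) - P⟫
        = -⟪∑ i, (Λ i k - β k • (X (k+1) - Y i k)), P - X (k+1)⟫ := by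
      rw [← inner_neg_right, neg_sub]
    rw [e2]
    linarith
  -- the master identity, summed over i
  have master_eq : ∀ (P : T) (Q : Fin N → T), ∀ k : ℕ,
      (∑ i, ‖Λ i (k+1) - Q i‖^2) + (β k)^2 * (∑ i, ‖Y i (k+1) - P‖^2)
        + (β k)^2 * (∑ i, ‖X (k+1) - Y i k‖^2)
        + 2*(β k)*((∑ i, ⟪(Λ i k - β k • (X (k+1) - Y i k)) - Q i, X (k+1) - P⟫)
            + (∑ i, ⟪-(Λ i (k+1) - Q i), Y i (k+1) - P⟫))
      = (∑ i, ‖Λ i k - Q i‖^2) + (β k)^2 * (∑ i, ‖Y i k - P‖^2) := by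
    intro P Q k
    have ident : ∀ i : Fin N,
        ‖Λ i (k+1) - Q i‖^2 + (β k)^2*‖Y i (k+1) - P‖^2 + (β k)^2*‖X (k+1) - Y i k‖^2
          + 2*(β k)*(⟪(Λ i k - β k • (X (k+1) - Y i k)) - Q i, X (k+1) - P⟫
              + ⟪-(Λ i (k+1) - Q i), Y i (k+1) - P⟫)
        = ‖Λ i k - Q i‖^2 + (β k)^2*‖Y i k - P‖^2 := by
      intro i
      have h1 := key_ident (Λ i k - Q i) (Y i k - P) (Y i (k+1) - P) (X (k+1) - P) (β k)
      have efc : (X (k+1) - P) - (Y i (k+1) - P) = X (k+1) - Y i (k+1) := by abel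
      have efb : (X (k+1) - P) - (Y i k - P) = X (k+1) - Y i k := by abel
      rw [efc, efb] at h1
      have e1 : (Λ i k - Q i) - β k • (X (k+1) - Y i (k+1)) = Λ i (k+1) - Q i := by
        rw [hc k i]; rw [sub_right_comm]
      have e2 : (Λ i k - Q i) - β k • (X (k+1) - Y i k)
          = (Λ i k - β k • (X (k+1) - Y i k)) - Q i := by
        rw [sub_right_comm]
      rw [e1, e2] at h1
      exact h1
    have hsum := Finset.sum_congr rfl (fun i (_ : i ∈ Finset.univ) => ident i)
    simp only [Finset.sum_add_distrib, ← Finset.mul_sum, mul_add] at hsum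
    linarith [hsum]
  -- master inequality in Fejér (divided) form
  have master : ∀ (P : T) (Q : Fin N → T), P ∈ B → ((∑ i, Q i) ∈ normalCone B P) →
      (∀ i, -(Q i) ∈ subdiff (h i) P) → ∀ k : ℕ,
      (∑ i, ‖Λ i (k+1) - Q i‖^2)/(β (k+1))^2 + (∑ i, ‖Y i (k+1) - P‖^2)
        + (∑ i, ‖X (k+1) - Y i k‖^2)
        + 2*((∑ i, ⟪(Λ i k - β k • (X (k+1) - Y i k)) - Q i, X (k+1) - P⟫)
            + (∑ i, ⟪-(Λ i (k+1) - Q i), Y i (k+1) - P⟫))/(β k)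
      ≤ (∑ i, ‖Λ i k - Q i‖^2)/(β k)^2 + (∑ i, ‖Y i k - P‖^2) := by
    intro P Q hP hQ hQs k
    have hβk := hβ k
    have hβk1 := hβ (k+1)
    have hm := hmono k
    have heq := master_eq P Q k
    have h1 : (∑ i, ‖Λ i (k+1) - Q i‖^2)/(β (k+1))^2 ≤ (∑ i, ‖Λ i (k+1) - Q i‖^2)/(β k)^2 := by
      apply div_le_div_of_nonneg_left (by positivity) (by positivity)
      exact pow_le_pow_left₀ hβk.le hm 2
    have h2 := salm_div_helper hβk (∑ i, ‖Λ i k - Q i‖^2) (∑ i, ‖Λ i (k+1) - Q i‖^2)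
      (∑ i, ‖Y i (k+1) - P‖^2) (∑ i, ‖X (k+1) - Y i k‖^2)
      ((∑ i, ⟪(Λ i k - β k • (X (k+1) - Y i k)) - Q i, X (k+1) - P⟫)
        + (∑ i, ⟪-(Λ i (k+1) - Q i), Y i (k+1) - P⟫))
      (∑ i, ‖Y i k - P‖^2) heq
    linarith
  -- Specialize to the given KKT point
  set S : ℕ → ℝ := fun k => ∑ i, ⟪(Λ i k - β k • (X (k+1) - Y i k)) - Λs i, X (k+1) - Xs⟫ with hSdef
  set Pt : ℕ → ℝ := fun k => ∑ i, ⟪-(Λ i (k+1) - Λs i), Y i (k+1) - Xs⟫ with hPtdef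
  set W : ℕ → ℝ := fun k => (∑ i, ‖Λ i k - Λs i‖^2)/(β k)^2 + ∑ i, ‖Y i k - Xs‖^2 with hWdef
  set G : ℕ → ℝ := fun k => ∑ i, ‖X (k+1) - Y i k‖^2 with hGdef
  have hSnn : ∀ k, 0 ≤ S k := by
    intro k; rw [hSdef]; exact Snn Xs Λs hXsB hΛs k
  have hPtnn : ∀ k, 0 ≤ Pt k := by
    intro k; rw [hPtdef]; exact Pnn Xs Λs hbs' k
  have hGnn : ∀ k, 0 ≤ G k := by
    intro k; rw [hGdef]; exact Finset.sum_nonneg (fun i _ => by positivity)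
  have hWnn : ∀ k, 0 ≤ W k := by
    intro k; rw [hWdef]; dsimp only; positivity
  set Dv : ℕ → ℝ := fun k => 2*(S k + Pt k)/(β k) with hDdef
  have hW1 : ∀ k, W (k+1) + G k + Dv k ≤ W k := by
    intro k
    have hm := master Xs Λs hXsB hΛs hbs' k
    rw [hDdef, hSdef, hPtdef, hWdef, hGdef]; dsimp only
    linarith
  have hdivnn : ∀ k, 0 ≤ Dv k := by
    intro k
    rw [hDdef]; dsimp only
    apply div_nonneg _ (hβ k).le
    have := hSnn k; have := hPtnn k; linarith
  have hWanti : ∀ k, W (k+1) ≤ W k := by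
    intro k; have := hW1 k; have := hGnn k; have := hdivnn k; linarith
  have hWle : ∀ j k, j ≤ k → W k ≤ W j := fun j k hjk =>
    (antitone_nat_of_succ_le hWanti) hjk
  have hWle0 : ∀ k, W k ≤ W 0 := fun k => hWle 0 k (Nat.zero_le k)
  have hpartial : ∀ K, (∑ k ∈ Finset.range K, (G k + Dv k)) ≤ W 0 - W K := by
    intro K
    induction K with
    | zero => simp
    | succ K ih =>
      rw [Finset.sum_range_succ]
      have := hW1 K
      linarith
  have hsummable : Summable (fun k => G k + Dv k) := by
    apply summable_of_sum_range_le (c := W 0) (fun k => add_nonneg (hGnn k) (hdivnn k))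
    intro n
    have := hpartial n; have := hWnn n; linarith
  have hGsum : Summable G :=
    hsummable.of_nonneg_of_le hGnn (fun k => le_add_of_nonneg_right (hdivnn k))
  have hSPsum : Summable (fun k => (S k + Pt k)/β k) := by
    have h2 : Summable Dv :=
      hsummable.of_nonneg_of_le hdivnn (fun k => le_add_of_nonneg_left (hGnn k))
    have h3 := h2.mul_left (2⁻¹ : ℝ)
    refine h3.congr (fun k => ?_)
    rw [hDdef]; dsimp only; ring
  have hGto : Tendsto G atTop (𝓝 0) := hGsum.tendsto_atTop_zero
  have hgle : ∀ i k, ‖X (k+1) - Y i k‖^2 ≤ G k := by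
    intro i k
    rw [hGdef]
    exact Finset.single_le_sum (f := fun j => ‖X (k+1) - Y j k‖^2)
      (fun j _ => by positivity) (Finset.mem_univ i)
  have hgto : ∀ i, Tendsto (fun k => X (k+1) - Y i k) atTop (𝓝 0) :=
    fun i => tendsto_sq_sum_zero hgle hGto i
  -- ‖X^{k+2} - Y^{k+2}‖ ≤ ‖X^{k+2} - Y^{k+1}‖
  have hdle : ∀ k i, ‖X (k+2) - Y i (k+2)‖ ≤ ‖X (k+2) - Y i (k+1)‖ := by
    intro k i
    have m1 := hb (k+1) i (Y i (k+1))
    have m2 := hb k i (Y i (k+2))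
    have hmono2 : ⟪Y i (k+2) - Y i (k+1), Λ i (k+2) - Λ i (k+1)⟫ ≤ 0 := by
      have e1 : ⟪Y i (k+1) - Y i (k+2), -(Λ i (k+2))⟫
          = ⟪Y i (k+2) - Y i (k+1), Λ i (k+2)⟫ := by
        rw [← neg_sub (Y i (k+2)) (Y i (k+1)), inner_neg_neg]
      rw [e1] at m1
      rw [inner_neg_right] at m2
      rw [inner_sub_right]
      linarith
    have hceq := hc (k+1) i
    have hv : Y i (k+2) - Y i (k+1)
        = (X (k+2) - Y i (k+1)) - (X (k+2) - Y i (k+2)) := by abel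
    have hΛd : Λ i (k+2) - Λ i (k+1) = -(β (k+1) • (X (k+2) - Y i (k+2))) := by
      rw [hceq]; abel
    rw [hv, hΛd] at hmono2
    rw [inner_neg_right, real_inner_smul_right, inner_sub_left] at hmono2
    have h5 : ‖X (k+2) - Y i (k+2)‖^2 ≤ ⟪X (k+2) - Y i (k+1), X (k+2) - Y i (k+2)⟫ := by
      have hβ1 := hβ (k+1)
      have hself : ⟪X (k+2) - Y i (k+2), X (k+2) - Y i (k+2)⟫
          = ‖X (k+2) - Y i (k+2)‖^2 := real_inner_self_eq_norm_sq _
      nlinarith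
    have h6 := real_inner_le_norm (X (k+2) - Y i (k+1)) (X (k+2) - Y i (k+2))
    nlinarith [norm_nonneg (X (k+2) - Y i (k+2)), norm_nonneg (X (k+2) - Y i (k+1))]
  have hdto : ∀ i, Tendsto (fun k => X (k+1) - Y i (k+1)) atTop (𝓝 0) := by
    intro i
    have hn : Tendsto (fun k => ‖X (k+1) - Y i k‖) atTop (𝓝 0) := by
      simpa using (hgto i).norm
    have hn2 : Tendsto (fun k => ‖X (k+1) - Y i (k+1)‖) atTop (𝓝 0) := by
      apply squeeze_zero' (Eventually.of_forall (fun k => norm_nonneg _)) ?_ hn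
      filter_upwards [eventually_ge_atTop 1] with k hk
      match k, hk with
      | (m+1), _ => exact hdle m i
    exact tendsto_zero_iff_norm_tendsto_zero.mpr hn2
  -- boundedness
  have hYb : ∀ i k, ‖Y i k - Xs‖^2 ≤ W 0 := by
    intro i k
    refine le_trans ?_ (hWle0 k)
    rw [hWdef]; dsimp only
    have h1 : ‖Y i k - Xs‖^2 ≤ ∑ j, ‖Y j k - Xs‖^2 :=
      Finset.single_le_sum (f := fun j => ‖Y j k - Xs‖^2)
        (fun j _ => by positivity) (Finset.mem_univ i)
    have h2 : 0 ≤ (∑ j, ‖Λ j k - Λs j‖^2)/(β k)^2 := by positivity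
    linarith
  have hΛb : ∀ i k, ‖Λ i (k+1)‖ ≤ L i := by
    intro i k
    have := subdiff_norm_le (hL i) (hb k i)
    rwa [norm_neg] at this
  have hGb : ∀ k, G k ≤ W 0 := by
    intro k
    have := hW1 k; have := hWnn (k+1); have := hdivnn k; have := hWle0 k
    linarith
  have hnormsq_sqrt : ∀ (v : T) (c : ℝ), ‖v‖^2 ≤ c → ‖v‖ ≤ Real.sqrt c := by
    intro v c hv
    calc ‖v‖ = Real.sqrt (‖v‖^2) := (Real.sqrt_sq (norm_nonneg _)).symm
      _ ≤ Real.sqrt c := Real.sqrt_le_sqrt hv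
  have hXb : ∀ k, ‖X (k+1) - Xs‖ ≤ 2*Real.sqrt (W 0) := by
    intro k
    have i0 : Fin N := ⟨0, hN⟩
    have h1 : ‖X (k+1) - Y i0 k‖ ≤ Real.sqrt (W 0) :=
      hnormsq_sqrt _ _ (le_trans (hgle i0 k) (hGb k))
    have h2 : ‖Y i0 k - Xs‖ ≤ Real.sqrt (W 0) := hnormsq_sqrt _ _ (hYb i0 k)
    calc ‖X (k+1) - Xs‖ = ‖(X (k+1) - Y i0 k) + (Y i0 k - Xs)‖ := by abel_nf
      _ ≤ ‖X (k+1) - Y i0 k‖ + ‖Y i0 k - Xs‖ := norm_add_le _ _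
      _ ≤ 2*Real.sqrt (W 0) := by linarith
  -- a subsequence along which the slack vanishes
  have hfreq : ∀ ε > (0:ℝ), ∃ᶠ k in atTop, S k + Pt k < ε := by
    intro ε hε
    by_contra hcon
    rw [Filter.not_frequently] at hcon
    have hcon' : ∀ᶠ k in atTop, ε ≤ S k + Pt k := by
      filter_upwards [hcon] with k hk
      exact le_of_not_gt hk
    obtain ⟨K, hK⟩ := eventually_atTop.mp hcon'
    apply hdiv
    rw [← summable_nat_add_iff K]
    apply Summable.of_nonneg_of_le (fun k => inv_nonneg.mpr (hβ _).le) (fun k => ?_)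
      (((summable_nat_add_iff K).mpr hSPsum).mul_left ε⁻¹)
    have h1 : ε ≤ S (k+K) + Pt (k+K) := hK (k+K) (Nat.le_add_left K k)
    have hβi : (0:ℝ) ≤ (β (k+K))⁻¹ := inv_nonneg.mpr (hβ _).le
    calc (β (k+K))⁻¹ = ε⁻¹ * (ε * (β (k+K))⁻¹) := by
          field_simp
      _ ≤ ε⁻¹ * ((S (k+K) + Pt (k+K)) * (β (k+K))⁻¹) := by
          apply mul_le_mul_of_nonneg_left
            (mul_le_mul_of_nonneg_right h1 hβi) (inv_nonneg.mpr hε.le)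
      _ = ε⁻¹ * ((S (k+K) + Pt (k+K))/β (k+K)) := by rw [div_eq_mul_inv]
  obtain ⟨φ, hφmono, hφto⟩ :=
    exists_subseq_tendsto_zero (fun k => add_nonneg (hSnn k) (hPtnn k)) hfreq
  -- compactness: extract a convergent sub-subsequence in the product space
  have hRY : ∀ i k, ‖Y i k‖ ≤ ‖Xs‖ + Real.sqrt (W 0) := by
    intro i k
    have h1 := hnormsq_sqrt _ _ (hYb i k)
    calc ‖Y i k‖ = ‖(Y i k - Xs) + Xs‖ := by rw [sub_add_cancel]
      _ ≤ ‖Y i k - Xs‖ + ‖Xs‖ := norm_add_le _ _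
      _ ≤ ‖Xs‖ + Real.sqrt (W 0) := by linarith
  have hRX : ∀ k, ‖X (k+1)‖ ≤ ‖Xs‖ + 2*Real.sqrt (W 0) := by
    intro k
    have h1 := hXb k
    calc ‖X (k+1)‖ = ‖(X (k+1) - Xs) + Xs‖ := by rw [sub_add_cancel]
      _ ≤ ‖X (k+1) - Xs‖ + ‖Xs‖ := norm_add_le _ _
      _ ≤ ‖Xs‖ + 2*Real.sqrt (W 0) := by linarith
  have hRL : ∀ i k, ‖Λ i (k+1)‖ ≤ ∑ j, (L j : ℝ) := by
    intro i k
    refine le_trans (hΛb i k) ?_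
    exact Finset.single_le_sum (f := fun j => (L j : ℝ))
      (fun j _ => (L j).coe_nonneg) (Finset.mem_univ i)
  set R : ℝ := max (‖Xs‖ + 2*Real.sqrt (W 0)) (max (‖Xs‖ + Real.sqrt (W 0)) (∑ j, (L j : ℝ)))
    with hRdef
  let u : ℕ → T × (Fin N → T) × (Fin N → T) :=
    fun j => (X (φ j + 1), fun i => Y i (φ j + 1), fun i => Λ i (φ j + 1))
  have humem : ∀ j, u j ∈ Metric.closedBall (0 : T × (Fin N → T) × (Fin N → T)) R := by
    intro j
    rw [Metric.mem_closedBall, dist_zero_right]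
    have hKnn : (0:ℝ) ≤ ‖Xs‖ + Real.sqrt (W 0) := by positivity
    have hLnn : (0:ℝ) ≤ ∑ j, (L j : ℝ) :=
      Finset.sum_nonneg (fun j _ => (L j).coe_nonneg)
    have hRnn : (0:ℝ) ≤ R := le_trans hKnn (le_trans (le_max_left _ _) (le_max_right _ _))
    rw [Prod.norm_def]
    apply max_le
    · exact le_trans (hRX (φ j)) (le_max_left _ _)
    · rw [Prod.norm_def]
      apply max_le
      · rw [pi_norm_le_iff_of_nonneg hRnn]
        intro i
        exact le_trans (hRY i (φ j + 1)) (le_trans (le_max_left _ _) (le_max_right _ _))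
      · rw [pi_norm_le_iff_of_nonneg hRnn]
        intro i
        exact le_trans (hRL i (φ j)) (le_trans (le_max_right _ _) (le_max_right _ _))
  obtain ⟨z, _, ψ, hψmono, hψto⟩ :=
    (isCompact_closedBall (0 : T × (Fin N → T) × (Fin N → T)) R).tendsto_subseq humem
  set σ : ℕ → ℕ := fun j => φ (ψ j) with hσdef
  have hσmono : StrictMono σ := hφmono.comp hψmono
  have hXto : Tendsto (fun j => X (σ j + 1)) atTop (𝓝 z.1) :=
    (continuous_fst.tendsto z).comp hψto
  have hYto : ∀ i, Tendsto (fun j => Y i (σ j + 1)) atTop (𝓝 (z.2.1 i)) := by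
    intro i
    have h1 : Tendsto (fun j => (u (ψ j)).2.1) atTop (𝓝 z.2.1) :=
      ((continuous_fst.comp continuous_snd).tendsto z).comp hψto
    exact tendsto_pi_nhds.mp h1 i
  have hΛto : ∀ i, Tendsto (fun j => Λ i (σ j + 1)) atTop (𝓝 (z.2.2 i)) := by
    intro i
    have h1 : Tendsto (fun j => (u (ψ j)).2.2) atTop (𝓝 z.2.2) :=
      ((continuous_snd.comp continuous_snd).tendsto z).comp hψto
    exact tendsto_pi_nhds.mp h1 i
  have hSPσ : Tendsto (fun j => S (σ j) + Pt (σ j)) atTop (𝓝 0) :=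
    hφto.comp hψmono.tendsto_atTop
  have hSσ : Tendsto (fun j => S (σ j)) atTop (𝓝 0) :=
    squeeze_zero (fun j => hSnn _) (fun j => le_add_of_nonneg_right (hPtnn _)) hSPσ
  have hPtσ : Tendsto (fun j => Pt (σ j)) atTop (𝓝 0) :=
    squeeze_zero (fun j => hPtnn _) (fun j => le_add_of_nonneg_left (hSnn _)) hSPσ
  have hdσ : ∀ i, Tendsto (fun j => X (σ j + 1) - Y i (σ j + 1)) atTop (𝓝 0) :=
    fun i => (hdto i).comp hσmono.tendsto_atTop
  have hYhat : ∀ i, z.2.1 i = z.1 := by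
    intro i
    have h1 := hXto.sub (hYto i)
    exact (sub_eq_zero.mp (tendsto_nhds_unique h1 (hdσ i))).symm
  have hYtoX : ∀ i, Tendsto (fun j => Y i (σ j + 1)) atTop (𝓝 z.1) :=
    fun i => hYhat i ▸ hYto i
  have hXhatB : z.1 ∈ B :=
    hBclosed.mem_of_tendsto hXto (Eventually.of_forall (fun j => hXB _))
  -- the limit of ⟪∑Λs, Xs - X^{k+1}⟫ along σ is 0
  have hT2nn : ∀ k, 0 ≤ ⟪∑ i, Λs i, Xs - X (k+1)⟫ := by
    intro k
    have h1 := hΛs (X (k+1)) (hXB k)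
    rw [show Xs - X (k+1) = -(X (k+1) - Xs) from (neg_sub _ _).symm, inner_neg_right]
    linarith
  have hT2leS : ∀ k, ⟪∑ i, Λs i, Xs - X (k+1)⟫ ≤ S k := by
    intro k
    rw [hSdef]; dsimp only
    have e1 : ∑ i, ⟪(Λ i k - β k • (X (k+1) - Y i k)) - Λs i, X (k+1) - Xs⟫
        = ⟪∑ i, (Λ i k - β k • (X (k+1) - Y i k)), X (k+1) - Xs⟫
          - ⟪∑ i, Λs i, X (k+1) - Xs⟫ := by
      rw [← inner_sub_left, ← Finset.sum_sub_distrib, sum_inner]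
    rw [e1]
    have h1 := ha k Xs hXsB
    have e2 : ⟪∑ i, (Λ i k - β k • (X (k+1) - Y i k)), X (k+1) - Xs⟫
        = -⟪∑ i, (Λ i k - β k • (X (k+1) - Y i k)), Xs - X (k+1)⟫ := by
      rw [← inner_neg_right, neg_sub]
    have e3 : ⟪∑ i, Λs i, X (k+1) - Xs⟫ = -⟪∑ i, Λs i, Xs - X (k+1)⟫ := by
      rw [← inner_neg_right, neg_sub]
    rw [e2, e3]
    linarith
  have hT2σ : Tendsto (fun j => ⟪∑ i, Λs i, Xs - X (σ j + 1)⟫) atTop (𝓝 0) :=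
    squeeze_zero (fun j => hT2nn _) (fun j => hT2leS _) hSσ
  have hT2lim : ⟪∑ i, Λs i, Xs - z.1⟫ = 0 := by
    have h1 : Tendsto (fun j => ⟪∑ i, Λs i, Xs - X (σ j + 1)⟫) atTop
        (𝓝 ⟪∑ i, Λs i, Xs - z.1⟫) :=
      tendsto_const_nhds.inner (tendsto_const_nhds.sub hXto)
    exact tendsto_nhds_unique h1 hT2σ
  -- Xs is optimal
  have hXsopt : ∀ X' ∈ B, ∑ i, h i Xs ≤ ∑ i, h i X' := by
    intro X' hX'
    have h2 : ∑ i, (h i Xs + ⟪X' - Xs, -(Λs i)⟫) ≤ ∑ i, h i X' :=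
      Finset.sum_le_sum (fun i _ => hbs' i X')
    rw [Finset.sum_add_distrib] at h2
    have e1 : ∑ i, ⟪X' - Xs, -(Λs i)⟫ = -⟪∑ i, Λs i, X' - Xs⟫ := by
      rw [← inner_sum, Finset.sum_neg_distrib, inner_neg_right,
        real_inner_comm (X' - Xs) (∑ i, Λs i)]
    have h3 := hΛs X' hX'
    rw [e1] at h2
    linarith
  -- optimality gap bound and limit
  have hgap : ∀ k, ∑ i, h i (Y i (k+1))
      ≤ ∑ i, h i Xs + Pt k - ∑ i, ⟪Y i (k+1) - Xs, Λs i⟫ := by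
    intro k
    have h1 : ∀ i, h i (Y i (k+1)) ≤ h i Xs + ⟪-(Λ i (k+1) - Λs i), Y i (k+1) - Xs⟫
        - ⟪Y i (k+1) - Xs, Λs i⟫ := by
      intro i
      have h2 := hb k i Xs
      have e1 : ⟪Xs - Y i (k+1), -(Λ i (k+1))⟫ = ⟪Y i (k+1) - Xs, Λ i (k+1)⟫ := by
        rw [← neg_sub (Y i (k+1)) Xs, inner_neg_neg]
      rw [e1] at h2
      have e2 : ⟪-(Λ i (k+1) - Λs i), Y i (k+1) - Xs⟫
          = -⟪Y i (k+1) - Xs, Λ i (k+1)⟫ + ⟪Y i (k+1) - Xs, Λs i⟫ := by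
        rw [real_inner_comm (Y i (k+1) - Xs) (-(Λ i (k+1) - Λs i)),
          inner_neg_right, inner_sub_right]
        ring
      rw [e2]
      linarith
    calc ∑ i, h i (Y i (k+1))
        ≤ ∑ i, (h i Xs + ⟪-(Λ i (k+1) - Λs i), Y i (k+1) - Xs⟫
            - ⟪Y i (k+1) - Xs, Λs i⟫) := Finset.sum_le_sum (fun i _ => h1 i)
      _ = ∑ i, h i Xs + Pt k - ∑ i, ⟪Y i (k+1) - Xs, Λs i⟫ := by
          rw [hPtdef]; dsimp only
          rw [Finset.sum_sub_distrib, Finset.sum_add_distrib]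
  have hinner0 : ∑ i, ⟪z.1 - Xs, Λs i⟫ = 0 := by
    rw [← inner_sum, real_inner_comm, ← neg_sub Xs z.1, inner_neg_right, hT2lim, neg_zero]
  have hgaplim : ∑ i, h i z.1 ≤ ∑ i, h i Xs := by
    have hlhs : Tendsto (fun j => ∑ i, h i (Y i (σ j + 1))) atTop (𝓝 (∑ i, h i z.1)) :=
      tendsto_finset_sum _ (fun i _ => ((hL i).continuous.tendsto _).comp (hYtoX i))
    have hinner : Tendsto (fun j => ∑ i, ⟪Y i (σ j + 1) - Xs, Λs i⟫) atTop
        (𝓝 (∑ i, ⟪z.1 - Xs, Λs i⟫)) :=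
      tendsto_finset_sum _
        (fun i _ => ((hYtoX i).sub tendsto_const_nhds).inner tendsto_const_nhds)
    have hrhs : Tendsto
        (fun j => ∑ i, h i Xs + Pt (σ j) - ∑ i, ⟪Y i (σ j + 1) - Xs, Λs i⟫) atTop
        (𝓝 (∑ i, h i Xs + 0 - ∑ i, ⟪z.1 - Xs, Λs i⟫)) :=
      (tendsto_const_nhds.add hPtσ).sub hinner
    have hle := le_of_tendsto_of_tendsto' hlhs hrhs (fun j => hgap (σ j))
    rw [hinner0] at hle
    linarith
  have hXhatopt : ∀ X' ∈ B, ∑ i, h i z.1 ≤ ∑ i, h i X' :=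
    fun X' hX' => le_trans hgaplim (hXsopt X' hX')
  -- endgame: Fejér monotonicity wrt a KKT pair at the limit point forces convergence
  have endgame : ∀ (Qh : Fin N → T), ((∑ i, Qh i) ∈ normalCone B z.1) →
      (∀ i, -(Qh i) ∈ subdiff (h i) z.1) →
      Tendsto (fun j => (∑ i, ‖Λ i (σ j + 1) - Qh i‖^2)/(β (σ j + 1))^2) atTop (𝓝 0) →
      ∀ i, Tendsto (Y i) atTop (𝓝 z.1) := by
    intro Qh hQh1 hQh2 hQh3
    set WA : ℕ → ℝ :=
      fun k => (∑ i, ‖Λ i k - Qh i‖^2)/(β k)^2 + ∑ i, ‖Y i k - z.1‖^2 with hWAdef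
    have hWA1 : ∀ k, WA (k+1) ≤ WA k := by
      intro k
      have hm := master z.1 Qh hXhatB hQh1 hQh2 k
      have hs := Snn z.1 Qh hXhatB hQh1 k
      have hp := Pnn z.1 Qh hQh2 k
      have hdd : 0 ≤ 2 * ((∑ i, ⟪(Λ i k - β k • (X (k+1) - Y i k)) - Qh i, X (k+1) - z.1⟫)
          + (∑ i, ⟪-(Λ i (k+1) - Qh i), Y i (k+1) - z.1⟫)) / β k :=
        div_nonneg (by linarith) (hβ k).le
      have hg : 0 ≤ ∑ i, ‖X (k+1) - Y i k‖^2 :=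
        Finset.sum_nonneg (fun i _ => by positivity)
      rw [hWAdef]; dsimp only
      linarith
    have hWAnn : ∀ k, 0 ≤ WA k := by
      intro k; rw [hWAdef]; dsimp only; positivity
    have hyto : Tendsto (fun j => ∑ i, ‖Y i (σ j + 1) - z.1‖^2) atTop (𝓝 0) := by
      have h0 : ∀ i : Fin N, Tendsto (fun j => ‖Y i (σ j + 1) - z.1‖^2) atTop (𝓝 0) := by
        intro i
        have h1 : Tendsto (fun j => Y i (σ j + 1) - z.1) atTop (𝓝 (0:T)) := by
          simpa using (hYtoX i).sub (tendsto_const_nhds (x := z.1))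
        have h2 : Tendsto (fun j => ‖Y i (σ j + 1) - z.1‖) atTop (𝓝 0) := by
          simpa using h1.norm
        simpa using h2.pow 2
      simpa using tendsto_finset_sum Finset.univ (fun i (_ : i ∈ Finset.univ) => h0 i)
    have hWAσ : Tendsto (fun j => WA (σ j + 1)) atTop (𝓝 0) := by
      rw [hWAdef]
      simpa using hQh3.add hyto
    have hWAto : Tendsto WA atTop (𝓝 0) :=
      tendsto_zero_of_antitone_subseq hWA1 hWAnn (σ := fun j => σ j + 1) hWAσ
    intro i
    apply tendsto_of_normsq_zero
    refine squeeze_zero (fun k => by positivity) (fun k => ?_) hWAto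
    have h1 : ‖Y i k - z.1‖^2 ≤ ∑ j', ‖Y j' k - z.1‖^2 :=
      Finset.single_le_sum (f := fun j' => ‖Y j' k - z.1‖^2)
        (fun j' _ => by positivity) (Finset.mem_univ i)
    have h2 : 0 ≤ (∑ j', ‖Λ j' k - Qh j'‖^2)/(β k)^2 := by positivity
    rw [hWAdef]; dsimp only
    linarith
  -- case split on boundedness of β to produce the needed KKT pair at the limit
  have hYall : ∀ i, Tendsto (Y i) atTop (𝓝 z.1) := by
    by_cases hBdd : BddAbove (Set.range β)
    · -- bounded case: the multipliers themselves converge along σ; their limit works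
      obtain ⟨M, hM⟩ := hBdd
      have hMk : ∀ k, β k ≤ M := fun k => hM (Set.mem_range_self k)
      have hM0 : (0:ℝ) < M := lt_of_lt_of_le (hβ 0) (hMk 0)
      have hgn : ∀ i, Tendsto (fun k => ‖X (k+1) - Y i k‖) atTop (𝓝 0) := by
        intro i; simpa using (hgto i).norm
      have hdn : ∀ i, Tendsto (fun k => ‖X (k+1) - Y i (k+1)‖) atTop (𝓝 0) := by
        intro i; simpa using (hdto i).norm
      have hYd : ∀ i, Tendsto (fun k => β k • (Y i (k+1) - Y i k)) atTop (𝓝 (0:T)) := by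
        intro i
        rw [tendsto_zero_iff_norm_tendsto_zero]
        have hbnd : Tendsto (fun k => M * (‖X (k+1) - Y i k‖ + ‖X (k+1) - Y i (k+1)‖))
            atTop (𝓝 (M * (0 + 0))) :=
          tendsto_const_nhds.mul ((hgn i).add (hdn i))
        refine squeeze_zero (fun k => norm_nonneg _) (fun k => ?_) (by simpa using hbnd)
        have ev : Y i (k+1) - Y i k = (X (k+1) - Y i k) - (X (k+1) - Y i (k+1)) := by abel
        calc ‖β k • (Y i (k+1) - Y i k)‖ = |β k| * ‖Y i (k+1) - Y i k‖ := by
              rw [norm_smul, Real.norm_eq_abs]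
          _ = β k * ‖Y i (k+1) - Y i k‖ := by rw [abs_of_pos (hβ k)]
          _ ≤ M * ‖Y i (k+1) - Y i k‖ :=
              mul_le_mul_of_nonneg_right (hMk k) (norm_nonneg _)
          _ ≤ M * (‖X (k+1) - Y i k‖ + ‖X (k+1) - Y i (k+1)‖) := by
              apply mul_le_mul_of_nonneg_left _ hM0.le
              rw [ev]
              exact norm_sub_le _ _
      have hΛtilde : ∀ i, Tendsto
          (fun j => Λ i (σ j) - β (σ j) • (X (σ j + 1) - Y i (σ j))) atTop
          (𝓝 (z.2.2 i)) := by
        intro i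
        have e1 : ∀ k, Λ i k - β k • (X (k+1) - Y i k)
            = Λ i (k+1) - β k • (Y i (k+1) - Y i k) := by
          intro k
          rw [hc k i, sub_sub, ← smul_add,
            show (X (k+1) - Y i (k+1)) + (Y i (k+1) - Y i k) = X (k+1) - Y i k from by abel]
        have h2 : Tendsto (fun j => Λ i (σ j + 1) - β (σ j) • (Y i (σ j + 1) - Y i (σ j)))
            atTop (𝓝 (z.2.2 i - 0)) :=
          (hΛto i).sub ((hYd i).comp hσmono.tendsto_atTop)
        rw [sub_zero] at h2
        exact h2.congr (fun j => (e1 (σ j)).symm)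
      have hNhat' : (∑ i, z.2.2 i) ∈ normalCone B z.1 := by
        intro X' hX'
        have hsumt : Tendsto
            (fun j => ∑ i, (Λ i (σ j) - β (σ j) • (X (σ j + 1) - Y i (σ j)))) atTop
            (𝓝 (∑ i, z.2.2 i)) :=
          tendsto_finset_sum _ (fun i _ => hΛtilde i)
        have hip : Tendsto
            (fun j => ⟪∑ i, (Λ i (σ j) - β (σ j) • (X (σ j + 1) - Y i (σ j))),
              X' - X (σ j + 1)⟫) atTop (𝓝 ⟪∑ i, z.2.2 i, X' - z.1⟫) :=
          hsumt.inner (tendsto_const_nhds.sub hXto)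
        exact le_of_tendsto hip (Eventually.of_forall (fun j => ha (σ j) X' hX'))
      have hsubhat' : ∀ i, -(z.2.2 i) ∈ subdiff (h i) z.1 := by
        intro i Y'
        have hrhs : Tendsto
            (fun j => h i (Y i (σ j + 1)) + ⟪Y' - Y i (σ j + 1), -(Λ i (σ j + 1))⟫) atTop
            (𝓝 (h i z.1 + ⟪Y' - z.1, -(z.2.2 i)⟫)) :=
          (((hL i).continuous.tendsto _).comp (hYtoX i)).add
            ((tendsto_const_nhds.sub (hYtoX i)).inner ((hΛto i).neg))
        exact le_of_tendsto hrhs (Eventually.of_forall (fun j => hb (σ j) i Y'))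
      have hdecay' : Tendsto (fun j => (∑ i, ‖Λ i (σ j + 1) - z.2.2 i‖^2)/(β (σ j + 1))^2)
          atTop (𝓝 0) := by
        have hnum : Tendsto (fun j => ∑ i, ‖Λ i (σ j + 1) - z.2.2 i‖^2) atTop (𝓝 0) := by
          have h0 : ∀ i : Fin N, Tendsto (fun j => ‖Λ i (σ j + 1) - z.2.2 i‖^2) atTop (𝓝 0) := by
            intro i
            have h1 : Tendsto (fun j => Λ i (σ j + 1) - z.2.2 i) atTop (𝓝 (0:T)) := by
              simpa using (hΛto i).sub (tendsto_const_nhds (x := z.2.2 i))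
            have h2 : Tendsto (fun j => ‖Λ i (σ j + 1) - z.2.2 i‖) atTop (𝓝 0) := by
              simpa using h1.norm
            simpa using h2.pow 2
          simpa using tendsto_finset_sum Finset.univ (fun i (_ : i ∈ Finset.univ) => h0 i)
        have hβ0le : ∀ k, (β 0)^2 ≤ (β k)^2 := fun k =>
          pow_le_pow_left₀ (hβ 0).le ((monotone_nat_of_le_succ hmono) (Nat.zero_le k)) 2
        refine squeeze_zero
          (g := fun j => (∑ i, ‖Λ i (σ j + 1) - z.2.2 i‖^2)/(β 0)^2)
          (fun j => by positivity) (fun j => ?_) (by simpa using hnum.div_const ((β 0)^2))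
        exact div_le_div_of_nonneg_left
          (Finset.sum_nonneg (fun i _ => by positivity)) (pow_pos (hβ 0) 2) (hβ0le _)
      exact endgame z.2.2 hNhat' hsubhat' hdecay'
    · -- unbounded case: β → ∞ and the original multipliers Λs work at the limit point
      have hsum_eq : ∑ i, h i z.1 = ∑ i, h i Xs :=
        le_antisymm hgaplim (hXsopt z.1 hXhatB)
      have hsum_inner0 : ∑ i, ⟪z.1 - Xs, -(Λs i)⟫ = 0 := by
        simp only [inner_neg_right]
        rw [Finset.sum_neg_distrib, hinner0, neg_zero]
      have hle1 : ∀ i ∈ Finset.univ, h i Xs + ⟪z.1 - Xs, -(Λs i)⟫ ≤ h i z.1 :=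
        fun i _ => hbs' i z.1
      have hsums : ∑ i, (h i Xs + ⟪z.1 - Xs, -(Λs i)⟫) = ∑ i, h i z.1 := by
        rw [Finset.sum_add_distrib, hsum_inner0, add_zero, hsum_eq]
      have htight := (Finset.sum_eq_sum_iff_of_le hle1).mp hsums
      have hsubhat : ∀ i, -(Λs i) ∈ subdiff (h i) z.1 := by
        intro i Y'
        have h1 := hbs' i Y'
        have e1 : ⟪Y' - Xs, -(Λs i)⟫ = ⟪Y' - z.1, -(Λs i)⟫ + ⟪z.1 - Xs, -(Λs i)⟫ := by
          rw [← inner_add_left, sub_add_sub_cancel]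
        have e2 := htight i (Finset.mem_univ i)
        rw [e1] at h1
        linarith
      have hNhat : (∑ i, Λs i) ∈ normalCone B z.1 := by
        intro X' hX'
        have h1 := hΛs X' hX'
        have e1 : ⟪∑ i, Λs i, X' - z.1⟫
            = ⟪∑ i, Λs i, X' - Xs⟫ + ⟪∑ i, Λs i, Xs - z.1⟫ := by
          rw [← inner_add_right, sub_add_sub_cancel]
        rw [e1, hT2lim]
        linarith
      have hβtop : Tendsto β atTop atTop :=
        tendsto_atTop_atTop_of_monotone' (monotone_nat_of_le_succ hmono) hBdd
      have hβσ1 : Tendsto (fun j => β (σ j + 1)) atTop atTop :=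
        hβtop.comp (tendsto_atTop_mono
          (fun j => le_trans (hσmono.le_apply) (Nat.le_succ _)) tendsto_id)
      have hβ2top : Tendsto (fun j => (β (σ j + 1))^2) atTop atTop :=
        (tendsto_pow_atTop (two_ne_zero)).comp hβσ1
      have hinvsq : Tendsto (fun j => ((β (σ j + 1))^2)⁻¹) atTop (𝓝 0) :=
        tendsto_inv_atTop_zero.comp hβ2top
      have hdecay : Tendsto (fun j => (∑ i, ‖Λ i (σ j + 1) - Λs i‖^2)/(β (σ j + 1))^2)
          atTop (𝓝 0) := by
        have hnum : ∀ j, ∑ i, ‖Λ i (σ j + 1) - Λs i‖^2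
            ≤ ∑ i, ((L i : ℝ) + ‖Λs i‖)^2 := by
          intro j
          apply Finset.sum_le_sum
          intro i _
          have h1 : ‖Λ i (σ j + 1) - Λs i‖ ≤ (L i : ℝ) + ‖Λs i‖ := by
            refine le_trans (norm_sub_le _ _) ?_
            have := hΛb i (σ j)
            linarith
          exact pow_le_pow_left₀ (norm_nonneg _) h1 2
        refine squeeze_zero (fun j => by positivity) (fun j => ?_)
          (by simpa using hinvsq.const_mul (∑ i, ((L i : ℝ) + ‖Λs i‖)^2))
        rw [div_eq_mul_inv]
        exact mul_le_mul_of_nonneg_right (hnum j) (by positivity)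
      exact endgame Λs hNhat hsubhat hdecay
  -- assemble the final statement
  have i0 : Fin N := ⟨0, hN⟩
  have hXall : Tendsto X atTop (𝓝 z.1) := by
    have h2 : Tendsto (fun k => Y i0 (k+1)) atTop (𝓝 z.1) :=
      (hYall i0).comp (tendsto_add_atTop_nat 1)
    have h3 : Tendsto (fun k => (X (k+1) - Y i0 (k+1)) + Y i0 (k+1)) atTop (𝓝 (0 + z.1)) :=
      (hdto i0).add h2
    rw [zero_add] at h3
    have h4 : Tendsto (fun k => X (k+1)) atTop (𝓝 z.1) :=
      h3.congr (fun k => by abel)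
    exact (tendsto_add_atTop_iff_nat 1).mp h4
  exact ⟨z.1, hXhatB, hXall, hYall, hXhatopt⟩
end

section
/- Given a SALM trajectory and a KKT point (X*, Y_1*, …, Y_N*, Λ_1*, …, Λ_N*), for every k ≥ 1 one has ∑_{i=1}^N h_i(Y_i^k) ≤ ∑_{i=1}^N h_i(Y_i*) + ∑_{i=1}^N ⟨Λ_i* − Λ_i^k, Y_i^k − Y_i*⟩ + ∑_{i=1}^N ⟨Λ̃_i^k − Λ_i*, X^k − X*⟩ + ∑_{i=1}^N ⟨Λ_i*, X^k − Y_i^k⟩, where ∑_{i=1}^N h_i(Y_i*) is the optimal objective value of the problem min ∑_{i=1}^N h_i(Y_i) subject to Y_i = X for all i and X ∈ B. -/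
open RealInnerProductSpace

/-- The objective-value estimate (5.5): for every k ≥ 1 (written k = m + 1),
∑ h_i(Y_i^k) ≤ ∑ h_i(Y_i*) + ∑ ⟪Λ_i* − Λ_i^k, Y_i^k − Y_i*⟫
+ ∑ ⟪Λ̃_i^k − Λ_i*, X^k − X*⟫ + ∑ ⟪Λ_i*, X^k − Y_i^k⟫,
where Λ̃_i^k = Λ_i^{k−1} − β^{k−1}(X^k − Y_i^{k−1}). -/
theorem salm_objective_bound
    {T : Type*} [NormedAddCommGroup T] [InnerProductSpace ℝ T] [FiniteDimensional ℝ T]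
    {N : ℕ} (hN : 0 < N)
    (B : Set T) (hBne : B.Nonempty) (hBclosed : IsClosed B) (hBconv : Convex ℝ B)
    (h : Fin N → T → ℝ) (hconv : ∀ i, ConvexOn ℝ Set.univ (h i))
    (X : ℕ → T) (Y Λ : Fin N → ℕ → T) (β : ℕ → ℝ)
    (hXB : ∀ k : ℕ, X (k + 1) ∈ B) (hβ : ∀ k : ℕ, 0 < β k)
    (ha : ∀ k : ℕ, (∑ i, (Λ i k - β k • (X (k + 1) - Y i k))) ∈ normalCone B (X (k + 1)))
    (hb : ∀ (k : ℕ) (i : Fin N), -(Λ i (k + 1)) ∈ subdiff (h i) (Y i (k + 1)))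
    (hc : ∀ (k : ℕ) (i : Fin N), Λ i (k + 1) = Λ i k - β k • (X (k + 1) - Y i (k + 1)))
    (Xs : T) (Ys Λs : Fin N → T)
    (hXsB : Xs ∈ B) (hΛs : (∑ i, Λs i) ∈ normalCone B Xs)
    (hbs : ∀ i, -(Λs i) ∈ subdiff (h i) (Ys i))
    (hYs : ∀ i, Ys i = Xs)
    : ∀ m : ℕ,
      ∑ i, h i (Y i (m + 1))
      ≤ ∑ i, h i (Ys i)
        + ∑ i, ⟪Λs i - Λ i (m + 1), Y i (m + 1) - Ys i⟫
        + ∑ i, ⟪(Λ i m - β m • (X (m + 1) - Y i m)) - Λs i, X (m + 1) - Xs⟫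
        + ∑ i, ⟪Λs i, X (m + 1) - Y i (m + 1)⟫ := by
  intro m
  -- subgradient inequality at Y i (m+1)
  have key : ∀ i, h i (Y i (m + 1))
      ≤ h i (Ys i) - ⟪Y i (m + 1) - Ys i, Λ i (m + 1)⟫ := by
    intro i
    have h1 := hb m i (Ys i)
    rw [inner_neg_right] at h1
    have h2 : ⟪Ys i - Y i (m + 1), Λ i (m + 1)⟫
        = -⟪Y i (m + 1) - Ys i, Λ i (m + 1)⟫ := by
      rw [← inner_neg_left, neg_sub]
    linarith [h1, h2.ge, h2.le]
  -- nonnegativity of the slack term from the normal cone condition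
  have hpos : 0 ≤ ∑ i, ⟪Λ i m - β m • (X (m + 1) - Y i m), X (m + 1) - Xs⟫ := by
    have h1 := ha m Xs hXsB
    rw [← sum_inner] at *
    rw [show X (m + 1) - Xs = -(Xs - X (m + 1)) by abel, inner_neg_right]
    linarith
  calc ∑ i, h i (Y i (m + 1))
      ≤ ∑ i, (h i (Ys i) - ⟪Y i (m + 1) - Ys i, Λ i (m + 1)⟫) :=
        Finset.sum_le_sum fun i _ => key i
    _ = ∑ i, (h i (Ys i)
          + ⟪Λs i - Λ i (m + 1), Y i (m + 1) - Ys i⟫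
          + ⟪(Λ i m - β m • (X (m + 1) - Y i m)) - Λs i, X (m + 1) - Xs⟫
          + ⟪Λs i, X (m + 1) - Y i (m + 1)⟫
          - ⟪Λ i m - β m • (X (m + 1) - Y i m), X (m + 1) - Xs⟫) := by
        refine Finset.sum_congr rfl fun i _ => ?_
        have c1 : ⟪Y i (m + 1), Λ i (m + 1)⟫ = ⟪Λ i (m + 1), Y i (m + 1)⟫ :=
          real_inner_comm _ _
        have c2 : ⟪Xs, Λ i (m + 1)⟫ = ⟪Λ i (m + 1), Xs⟫ := real_inner_comm _ _
        simp only [hYs i, inner_sub_left, inner_sub_right]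
        linarith
    _ = ∑ i, h i (Ys i)
        + ∑ i, ⟪Λs i - Λ i (m + 1), Y i (m + 1) - Ys i⟫
        + ∑ i, ⟪(Λ i m - β m • (X (m + 1) - Y i m)) - Λs i, X (m + 1) - Xs⟫
        + ∑ i, ⟪Λs i, X (m + 1) - Y i (m + 1)⟫
        - ∑ i, ⟪Λ i m - β m • (X (m + 1) - Y i m), X (m + 1) - Xs⟫ := by
        simp [Finset.sum_add_distrib, Finset.sum_sub_distrib]
    _ ≤ _ := by linarith
end
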